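/- arXiv:2308.12285 — 6 statements merged into one kernel-verified Lean document; each statement's English description precedes it below -/
import Mathlib

section
/- Let n ≥ 4 be an integer, let S_1, …, S_{n-3} be subsets of {1,…,n}, and for each j let i_j be a chosen element of S_j. If S_1, …, S_{n-3} satisfies the Cerberus condition, then there exist subsets S_1', …, S_{n-3}' such that for every j one has i_j ∈ S_j' ⊆ S_j and |S_j'| = 4, and S_1', …, S_{n-3}' also satisfies the Cerberus condition. -/
/-!
Call `J` tight when `|⋃_{j ∈ J} S_j| = |J| + 3`. Since `J ↦ |⋃_{j ∈ J} S_j|` is submodular, two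
tight sets with a common index have a tight intersection. Suppose no `x ∈ S_j \ {i_j}` can be
removed from a set `S_j` with `|S_j| ≥ 5`. Then each such `x` is witnessed by a tight `J_x ∋ j`
in which `S_j` is the only set containing `x`, and the intersection `M` of all the `J_x` is a
tight set in which `S_j \ {i_j}` is disjoint from the other sets. Counting `M`'s union then
contradicts the Cerberus condition for `M \ {j}` (or `|S_j| ≥ 5` when `M = {j}`). So elements
can be removed one at a time until every set has at most four elements, hence exactly four by
the condition for `{j}`.
-/
/-- A collection `S : Fin (n-3) → Finset (Fin n)` satisfies the Cerberus condition if
`|⋃_{j ∈ J} S j| ≥ |J| + 3` for every nonempty `J`. -/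
def CerberusCondition {n : ℕ} (S : Fin (n - 3) → Finset (Fin n)) : Prop :=
  ∀ J : Finset (Fin (n - 3)), J.Nonempty → J.card + 3 ≤ (J.biUnion S).card

open Finset Function

variable {ι α : Type*}

def HasHallSurplus [DecidableEq α] (k : ℕ) (S : ι → Finset α) : Prop :=
  ∀ J : Finset ι, J.Nonempty → #J + k ≤ #(J.biUnion S)

namespace HasHallSurplus

variable [DecidableEq α] {k : ℕ} {S : ι → Finset α}

lemma add_one_le_card (hS : HasHallSurplus k S) (j : ι) : k + 1 ≤ #(S j) := by
  simpa [add_comm] using hS {j} (singleton_nonempty j)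

variable [DecidableEq ι]

lemma card_biUnion_inter_eq (hS : HasHallSurplus k S) {A B : Finset ι}
    (hA : #(A.biUnion S) = #A + k) (hB : #(B.biUnion S) = #B + k) (hAB : (A ∩ B).Nonempty) :
    #((A ∩ B).biUnion S) = #(A ∩ B) + k := by
  have hunion := hS (A ∪ B) (hAB.mono (inter_subset_left.trans subset_union_left))
  rw [union_biUnion] at hunion
  have hinter : #((A ∩ B).biUnion S) ≤ #(A.biUnion S ∩ B.biUnion S) :=
    card_le_card <| subset_inter (biUnion_subset_biUnion_of_subset_left S inter_subset_left)
      (biUnion_subset_biUnion_of_subset_left S inter_subset_right)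
  have hlower := hS (A ∩ B) hAB
  have hmodular := card_inter_add_card_union (A.biUnion S) (B.biUnion S)
  have hindices := card_inter_add_card_union A B
  omega

lemma exists_tight_of_not_erase (hS : HasHallSurplus k S) {j : ι} {x : α}
    (hfail : ¬ HasHallSurplus k (update S j ((S j).erase x))) :
    ∃ J, j ∈ J ∧ #(J.biUnion S) = #J + k ∧ x ∉ (J.erase j).biUnion S := by
  set S₁ := update S j ((S j).erase x)
  have hS₁ : ∀ l, l ≠ j → S₁ l = S l := fun l hl => update_of_ne hl _ _
  obtain ⟨J, hJ, hlt⟩ : ∃ J : Finset ι, J.Nonempty ∧ #(J.biUnion S₁) < #J + k := by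
    simpa [HasHallSurplus] using hfail
  have hcover : J.biUnion S ⊆ insert x (J.biUnion S₁) := by
    refine biUnion_subset.2 fun l hl y hy => ?_
    rcases eq_or_ne y x with rfl | hyx
    · exact mem_insert_self _ _
    refine mem_insert_of_mem (mem_biUnion.2 ⟨l, hl, ?_⟩)
    rcases eq_or_ne l j with rfl | hlj
    · simpa [S₁] using ⟨hyx, hy⟩
    · rwa [hS₁ l hlj]
  have hJS := hS J hJ
  have hxJ : x ∉ J.biUnion S₁ := fun hx => by
    have := card_le_card (hcover.trans (insert_subset hx Subset.rfl))
    omega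
  have htight : #(J.biUnion S) = #J + k := by
    have := (card_le_card hcover).trans (card_insert_le _ _)
    omega
  have hxS : x ∈ J.biUnion S := by
    by_contra hx
    have := card_le_card ((subset_insert_iff_of_notMem hx).1 hcover)
    omega
  have hxrest : x ∉ (J.erase j).biUnion S := fun hx => by
    obtain ⟨l, hl, hxl⟩ := mem_biUnion.1 hx
    exact hxJ (mem_biUnion.2 ⟨l, mem_of_mem_erase hl, hS₁ l (ne_of_mem_erase hl) ▸ hxl⟩)
  obtain ⟨l, hl, hxl⟩ := mem_biUnion.1 hxS
  have hlj : l = j := by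
    by_contra hlj
    exact hxrest (mem_biUnion.2 ⟨l, mem_erase.2 ⟨hlj, hl⟩, hxl⟩)
  exact ⟨J, hlj ▸ hl, htight, hxrest⟩

lemma exists_erase_of_add_two_le_card (hS : HasHallSurplus k S) (hk : 0 < k) {j : ι} {a : α}
    (ha : a ∈ S j) (hcard : k + 2 ≤ #(S j)) :
    ∃ x ∈ (S j).erase a, HasHallSurplus k (update S j ((S j).erase x)) := by
  by_contra! hfail
  choose! J hjJ hJ hxJ using fun x hx => hS.exists_tight_of_not_erase (hfail x hx)
  set E := (S j).erase a
  have hE : k + 1 ≤ #E := by rw [card_erase_of_mem ha]; omega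
  have hEne : E.Nonempty := card_pos.1 (by omega)
  set M := E.inf' hEne J
  obtain ⟨hjM, hM⟩ : j ∈ M ∧ #(M.biUnion S) = #M + k := by
    refine inf'_induction (p := fun A => j ∈ A ∧ #(A.biUnion S) = #A + k) hEne J ?_
      fun x hx => ⟨hjJ x hx, hJ x hx⟩
    rintro A ⟨hjA, hA⟩ B ⟨hjB, hB⟩
    have hjAB : j ∈ A ∩ B := mem_inter.2 ⟨hjA, hjB⟩
    exact ⟨hjAB, hS.card_biUnion_inter_eq hA hB ⟨j, hjAB⟩⟩
  have hdisj : Disjoint E ((M.erase j).biUnion S) := disjoint_left.2 fun x hx hxM =>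
    hxJ x hx (biUnion_subset_biUnion_of_subset_left S (erase_subset_erase j (inf'_le J hx)) hxM)
  have hunion : E ∪ (M.erase j).biUnion S ⊆ M.biUnion S :=
    union_subset ((erase_subset a _).trans (subset_biUnion_of_mem S hjM))
      (biUnion_subset_biUnion_of_subset_left S (erase_subset j M))
  have hMj := card_erase_of_mem hjM
  have hSj := card_le_card (subset_biUnion_of_mem S hjM)
  rcases (M.erase j).eq_empty_or_nonempty with hempty | hne
  · rw [hempty, card_empty] at hMj
    omega
  · have hcount := card_le_card hunion
    rw [card_union_of_disjoint hdisj] at hcount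
    have hrest := hS _ hne
    omega

variable [Fintype ι]

theorem exists_subset_card_eq_add_one (hS : HasHallSurplus k S) (hk : 0 < k) (i : ι → α)
    (hi : ∀ j, i j ∈ S j) :
    ∃ S' : ι → Finset α, (∀ j, i j ∈ S' j) ∧ (∀ j, S' j ⊆ S j) ∧ (∀ j, #(S' j) = k + 1) ∧
      HasHallSurplus k S' := by
  induction hN : ∑ j, #(S j) using Nat.strong_induction_on generalizing S with
  | _ N ih =>
  by_cases hsmall : ∀ j, #(S j) ≤ k + 1
  · exact ⟨S, hi, fun _ => Subset.rfl,
      fun j => (hsmall j).antisymm (hS.add_one_le_card j), hS⟩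
  push Not at hsmall
  obtain ⟨j, hj⟩ := hsmall
  obtain ⟨x, hx, hS₁⟩ := hS.exists_erase_of_add_two_le_card hk (hi j) hj
  set S₁ := update S j ((S j).erase x)
  have hsub : ∀ l, S₁ l ⊆ S l := fun l => by
    rcases eq_or_ne l j with rfl | hlj
    · simpa [S₁] using erase_subset x (S l)
    · simp [S₁, hlj]
  have hi₁ : ∀ l, i l ∈ S₁ l := fun l => by
    rcases eq_or_ne l j with rfl | hlj
    · simpa [S₁, eq_comm] using ⟨ne_of_mem_erase hx, hi l⟩
    · simpa [S₁, hlj] using hi l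
  have hlt : ∑ l, #(S₁ l) < N := hN ▸ sum_lt_sum (fun l _ => card_le_card (hsub l))
    ⟨j, mem_univ j, by simpa [S₁] using card_lt_card (erase_ssubset (mem_of_mem_erase hx))⟩
  obtain ⟨S', hiS', hS'sub, hcard, hS'⟩ := ih _ hlt hS₁ hi₁ rfl
  exact ⟨S', hiS', fun l => (hS'sub l).trans (hsub l), hcard, hS'⟩

end HasHallSurplus

theorem cerberus_reduction_to_quadruples_general (n : ℕ)
    (S : Fin (n - 3) → Finset (Fin n)) (i : Fin (n - 3) → Fin n)
    (hi : ∀ j, i j ∈ S j) (hC : CerberusCondition S) :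
    ∃ S' : Fin (n - 3) → Finset (Fin n),
      (∀ j, i j ∈ S' j) ∧ (∀ j, S' j ⊆ S j) ∧ (∀ j, (S' j).card = 4) ∧
        CerberusCondition S' :=
  HasHallSurplus.exists_subset_card_eq_add_one (k := 3) hC three_pos i hi

/-- If `S_1, …, S_{n-3}` satisfies the Cerberus condition and `i_j ∈ S_j` for all `j`, then
there are subsets `S'_j` with `i_j ∈ S'_j ⊆ S_j`, `|S'_j| = 4`, satisfying the Cerberus
condition. -/
theorem cerberus_reduction_to_quadruples (n : ℕ) (hn : 4 ≤ n)
    (S : Fin (n - 3) → Finset (Fin n)) (i : Fin (n - 3) → Fin n)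
    (hi : ∀ j, i j ∈ S j) (hC : CerberusCondition S) :
    ∃ S' : Fin (n - 3) → Finset (Fin n),
      (∀ j, i j ∈ S' j) ∧ (∀ j, S' j ⊆ S j) ∧ (∀ j, (S' j).card = 4) ∧
        CerberusCondition S' :=
  cerberus_reduction_to_quadruples_general n S i hi hC
end

section
/- (Hall–Rado theorem) Let M be a matroid on a finite ground set E with rank function rk, and let A_1, …, A_ℓ be subsets of E. Then there exist pairwise distinct elements a_1, …, a_ℓ with a_j ∈ A_j for all j ∈ {1,…,ℓ} such that {a_1,…,a_ℓ} is an independent set of M, if and only if rk(⋃_{j∈J} A_j) ≥ |J| for every subset J ⊆ {1,…,ℓ}. -/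
/-!
Rado's argument. Call a family `A` *Rado* if `|J| ≤ rk (⋃ j ∈ J, A j)` for every `J`.
If `x ≠ y` both lie in `A j₀`, then deleting `x` or deleting `y` from `A j₀` keeps the family
Rado. Otherwise take failing index sets `J₁, J₂` (both must contain `j₀`) with unions `X, Y`;
since `x ≠ y`, the union over `J₁ ∪ J₂` lies in `X ∪ Y`, and the one over `(J₁ ∩ J₂) \ {j₀}`
lies in `X ∩ Y`, so submodularity gives
`|J₁ ∪ J₂| + |J₁ ∩ J₂| - 1 ≤ rk (X ∪ Y) + rk (X ∩ Y) ≤ rk X + rk Y ≤ |J₁| + |J₂| - 2`.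
So a minimal Rado subfamily consists of singletons `{a j}`; the condition on pairs makes `a`
injective, and the condition on all indices makes its range independent.
-/

/-- The rank of a set `X` in a matroid `M`: the maximum size of an independent subset of `X`. -/
noncomputable def matroidRank {α : Type*} (M : Matroid α) (X : Set α) : ℕ :=
  sSup {k | ∃ I, I ⊆ X ∧ M.Indep I ∧ I.ncard = k}

namespace Matroid

variable {α ι : Type*} {M : Matroid α} {A : ι → Set α} {a : ι → α}

def RadoCondition (M : Matroid α) (A : ι → Set α) : Prop :=
  ∀ J : Finset ι, (J.card : ℕ∞) ≤ M.eRk (⋃ j ∈ J, A j)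

def IsIndepTransversal (M : Matroid α) (A : ι → Set α) (a : ι → α) : Prop :=
  Function.Injective a ∧ (∀ j, a j ∈ A j) ∧ M.Indep (Set.range a)

lemma IsIndepTransversal.radoCondition (h : M.IsIndepTransversal A a) : M.RadoCondition A := by
  obtain ⟨hinj, hmem, hind⟩ := h
  intro J
  calc (J.card : ℕ∞) = (a '' J).encard := by
        rw [hinj.encard_image, Set.encard_coe_eq_coe_finsetCard]
    _ ≤ M.eRk (⋃ j ∈ J, A j) :=
        (hind.subset (Set.image_subset_range a J)).encard_le_eRk_of_subset
          (Set.image_subset_iff.2 fun j hj => Set.mem_biUnion hj (hmem j))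

lemma RadoCondition.nonempty (h : M.RadoCondition A) (j : ι) : (A j).Nonempty :=
  Set.nonempty_iff_ne_empty.2 fun hj => by simpa [hj] using h {j}

lemma RadoCondition.isIndepTransversal_singleton [Finite ι]
    (h : M.RadoCondition fun j => {a j}) : M.IsIndepTransversal (fun j => {a j}) a := by
  classical
  have hinj : Function.Injective a := by
    intro i j hij
    by_contra hne
    have hpair := h {i, j}
    rw [Finset.card_pair hne] at hpair
    simp only [Finset.mem_insert, Finset.mem_singleton, Set.iUnion_iUnion_eq_or_left,
      Set.iUnion_iUnion_eq_left, hij, Set.union_self] at hpair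
    have := hpair.trans ((M.eRk_le_encard _).trans_eq (Set.encard_singleton _))
    norm_num at this
  cases nonempty_fintype ι
  have hrange : (⋃ j ∈ Finset.univ, ({a j} : Set α)) = Set.range a := by
    ext; simp [eq_comm]
  refine ⟨hinj, fun j => rfl, M.isRkFinite_of_finite (Set.finite_range a)
    |>.indep_of_encard_le_eRk ?_⟩
  calc (Set.range a).encard = (Finset.univ : Finset ι).card := by
        rw [← Set.image_univ, hinj.encard_image, Set.encard_univ, ENat.card_eq_coe_fintype_card,
          Finset.card_univ]
    _ ≤ M.eRk (Set.range a) := hrange ▸ h Finset.univ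

lemma RadoCondition.mem_of_eRk_biUnion_update_lt [DecidableEq ι] (h : M.RadoCondition A)
    {j₀ : ι} {S : Set α} {J : Finset ι}
    (hJ : M.eRk (⋃ j ∈ J, Function.update A j₀ S j) < J.card) : j₀ ∈ J := by
  by_contra hj₀
  have hU : (⋃ j ∈ J, Function.update A j₀ S j) = ⋃ j ∈ J, A j :=
    Set.iUnion₂_congr fun j hj => Function.update_of_ne (ne_of_mem_of_not_mem hj hj₀) _ _
  exact (h J).not_gt (hU ▸ hJ)

lemma RadoCondition.update_diff_singleton_or [DecidableEq ι] (h : M.RadoCondition A) {j₀ : ι}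
    {x y : α} (hxy : x ≠ y) :
    M.RadoCondition (Function.update A j₀ (A j₀ \ {x})) ∨
      M.RadoCondition (Function.update A j₀ (A j₀ \ {y})) := by
  by_contra! hfail
  simp only [RadoCondition, not_forall, not_le] at hfail
  obtain ⟨⟨J₁, hJ₁⟩, ⟨J₂, hJ₂⟩⟩ := hfail
  have hj₁ := h.mem_of_eRk_biUnion_update_lt hJ₁
  have hj₂ := h.mem_of_eRk_biUnion_update_lt hJ₂
  set X := ⋃ j ∈ J₁, Function.update A j₀ (A j₀ \ {x}) j
  set Y := ⋃ j ∈ J₂, Function.update A j₀ (A j₀ \ {y}) j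
  have hunion : (⋃ j ∈ J₁ ∪ J₂, A j) ⊆ X ∪ Y := by
    simp only [Set.iUnion₂_subset_iff, Finset.mem_union]
    intro j hj e he
    obtain rfl | hne := eq_or_ne j j₀
    · obtain rfl | hex := eq_or_ne e x
      · exact .inr (Set.mem_biUnion hj₂ (by simpa using ⟨he, hxy⟩))
      · exact .inl (Set.mem_biUnion hj₁ (by simpa using ⟨he, hex⟩))
    · rcases hj with hj | hj
      · exact .inl (Set.mem_biUnion hj (by simpa [hne] using he))
      · exact .inr (Set.mem_biUnion hj (by simpa [hne] using he))
  have hinter : (⋃ j ∈ (J₁ ∩ J₂).erase j₀, A j) ⊆ X ∩ Y := by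
    simp only [Set.iUnion₂_subset_iff, Finset.mem_erase, Finset.mem_inter]
    rintro j ⟨hne, hj₁, hj₂⟩ e he
    exact ⟨Set.mem_biUnion hj₁ (by simpa [hne] using he),
      Set.mem_biUnion hj₂ (by simpa [hne] using he)⟩
  have hcard := Finset.card_union_add_card_inter J₁ J₂
  have herase := Finset.card_erase_add_one (Finset.mem_inter.2 ⟨hj₁, hj₂⟩)
  have hsubmod := M.eRk_inter_add_eRk_union_le X Y
  have hU := (h (J₁ ∪ J₂)).trans (M.eRk_mono hunion)
  have hI := (h ((J₁ ∩ J₂).erase j₀)).trans (M.eRk_mono hinter)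
  rw [← ENat.add_one_le_natCast_iff] at hJ₁ hJ₂
  have : (((J₁ ∩ J₂).erase j₀).card + (J₁ ∪ J₂).card + 2 : ℕ∞) ≤ J₁.card + J₂.card := by
    calc _ ≤ M.eRk (X ∩ Y) + M.eRk (X ∪ Y) + 2 := add_le_add_left (add_le_add hI hU) 2
      _ ≤ M.eRk X + 1 + (M.eRk Y + 1) := by
        rw [add_add_add_comm, one_add_one_eq_two]
        exact add_le_add_left hsubmod 2
      _ ≤ _ := add_le_add hJ₁ hJ₂
  norm_cast at this
  omega

theorem RadoCondition.exists_isIndepTransversal [Finite ι] (h : M.RadoCondition A)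
    (hA : ∀ j, (A j).Finite) : ∃ a, M.IsIndepTransversal A a := by
  classical
  have hfin : {B : ι → Set α | B ≤ A ∧ M.RadoCondition B}.Finite :=
    (Set.Finite.pi' fun j => (hA j).finite_subsets).subset fun B hB => hB.1
  obtain ⟨B, hBA, ⟨-, hB⟩, hmin⟩ := hfin.exists_le_minimal ⟨le_rfl, h⟩
  have hdelete : ∀ j, ∀ z ∈ B j, ¬ M.RadoCondition (Function.update B j (B j \ {z})) := by
    intro j z hz hz'
    have hle : Function.update B j (B j \ {z}) ≤ B := fun i => by
      rcases eq_or_ne i j with rfl | hij <;> simp [*]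
    simpa using hmin ⟨hle.trans hBA, hz'⟩ hle j hz
  have hsingle : ∀ j, ∃ b, B j = {b} := by
    intro j
    obtain ⟨x, hx⟩ := hB.nonempty j
    refine ⟨x, (Set.subsingleton_of_forall_eq x fun y hy => ?_).eq_singleton_of_mem hx⟩
    by_contra hyx
    rcases hB.update_diff_singleton_or (j₀ := j) hyx with h' | h'
    exacts [hdelete j y hy h', hdelete j x hx h']
  choose b hb using hsingle
  obtain rfl : B = fun j => {b j} := funext hb
  obtain ⟨hinj, -, hind⟩ := hB.isIndepTransversal_singleton
  exact ⟨b, hinj, fun j => hBA j rfl, hind⟩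

lemma natCast_matroidRank (hE : M.E.Finite) (X : Set α) :
    (matroidRank M X : ℕ∞) = M.eRk X := by
  obtain ⟨r, hr⟩ := ENat.ne_top_iff_exists.1 <| ne_top_of_le_ne_top hE.encard_lt_top.ne
    ((M.eRk_le_eRank X).trans M.eRank_le_encard_ground)
  have hS : {k | ∃ I, I ⊆ X ∧ M.Indep I ∧ I.ncard = k} = Set.Iic r := by
    ext k
    rw [Set.mem_Iic, ← Nat.cast_le (α := ℕ∞), hr, le_eRk_iff]
    refine exists_congr fun I => and_congr_right fun _ => and_congr_right fun hI => ?_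
    rw [← (hE.subset hI.subset_ground).cast_ncard_eq, Nat.cast_inj]
  rw [matroidRank, hS, csSup_Iic, hr]

lemma radoCondition_iff_forall_card_le_matroidRank (hE : M.E.Finite) :
    M.RadoCondition A ↔ ∀ J : Finset ι, J.card ≤ matroidRank M (⋃ j ∈ J, A j) := by
  simp only [RadoCondition, ← natCast_matroidRank hE, Nat.cast_le]

end Matroid

/-- **Hall–Rado theorem.** Let `M` be a matroid on a finite ground set and `A_1, …, A_ℓ`
subsets of the ground set.  There exist pairwise distinct `a_1, …, a_ℓ` with `a_j ∈ A_j`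
forming an independent set of `M` if and only if `rk(⋃_{j ∈ J} A_j) ≥ |J|` for all `J`. -/
theorem hall_rado {α : Type*} (M : Matroid α) (hE : M.E.Finite)
    (ℓ : ℕ) (A : Fin ℓ → Set α) (hA : ∀ j, A j ⊆ M.E) :
    (∃ a : Fin ℓ → α, Function.Injective a ∧ (∀ j, a j ∈ A j) ∧
        M.Indep (Set.range a)) ↔
      ∀ J : Finset (Fin ℓ), J.card ≤ matroidRank M (⋃ j ∈ J, A j) := by
  rw [← Matroid.radoCondition_iff_forall_card_le_matroidRank hE]
  exact ⟨fun ⟨_, ha⟩ => Matroid.IsIndepTransversal.radoCondition ha,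
    fun h => h.exists_isIndepTransversal fun j => hE.subset (hA j)⟩
end

section
/- Let M be a matroid on a finite ground set E, and let A_1, …, A_ℓ be subsets of E. Then there exist pairwise distinct elements a_1, …, a_ℓ with a_j ∈ A_j for all j such that {a_1,…,a_ℓ} is an independent set of M, if and only if there exist pairwise distinct elements b_1, …, b_ℓ with b_j ∈ cl_M(A_j) for all j (where cl_M denotes the closure operator of M) such that {b_1,…,b_ℓ} is an independent set of M. -/
/-- Let `M` be a matroid on a finite ground set and `A_1, …, A_ℓ` subsets of the ground set.
There exist pairwise distinct `a_1, …, a_ℓ` with `a_j ∈ A_j` forming an independent set of `M`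
if and only if there exist pairwise distinct `b_1, …, b_ℓ` with `b_j ∈ cl_M(A_j)` forming an
independent set of `M`. -/
theorem hall_rado_closure {α : Type*} (M : Matroid α) (hE : M.E.Finite)
    (ℓ : ℕ) (A : Fin ℓ → Set α) (hA : ∀ j, A j ⊆ M.E) :
    (∃ a : Fin ℓ → α, Function.Injective a ∧ (∀ j, a j ∈ A j) ∧
        M.Indep (Set.range a)) ↔
      (∃ b : Fin ℓ → α, Function.Injective b ∧ (∀ j, b j ∈ M.closure (A j)) ∧
        M.Indep (Set.range b)) := by
  constructor
  · rintro ⟨a, hinj, hmem, hind⟩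
    exact ⟨a, hinj, fun j => M.subset_closure (A j) (hA j) (hmem j), hind⟩
  · rintro ⟨b, hinj, hmem, hind⟩
    suffices H : ∀ m : ℕ, ∀ c : Fin ℓ → α, Function.Injective c →
        (∀ j : Fin ℓ, (j : ℕ) < ℓ - m → c j ∈ A j) →
        (∀ j : Fin ℓ, ℓ - m ≤ (j : ℕ) → c j ∈ M.closure (A j)) →
        M.Indep (Set.range c) →
        ∃ a : Fin ℓ → α, Function.Injective a ∧ (∀ j, a j ∈ A j) ∧
          M.Indep (Set.range a) by
      exact H ℓ b hinj (fun j h => absurd h (by simp)) (fun j _ => hmem j) hind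
    intro m
    induction m with
    | zero =>
      intro c hcinj hc1 _ hcind
      exact ⟨c, hcinj, fun j => hc1 j (by simp), hcind⟩
    | succ m ih =>
      intro c hcinj hc1 hc2 hcind
      by_cases hm : ℓ ≤ m
      · refine ih c hcinj (fun j hj => hc1 j ?_) (fun j hj => hc2 j ?_) hcind
        · omega
        · omega
      push_neg at hm
      set k : ℕ := ℓ - (m + 1) with hk
      have hkℓ : k < ℓ := by omega
      set i : Fin ℓ := ⟨k, hkℓ⟩ with hi
      set I : Set α := Set.range c \ {c i} with hI
      have hIind : M.Indep I := hcind.subset Set.diff_subset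
      have hci : c i ∉ M.closure I :=
        hcind.notMem_closure_diff_of_mem ⟨i, rfl⟩
      -- find a ∈ A i with a ∉ M.closure I
      have : ¬ (A i ⊆ M.closure I) := by
        intro hsub
        have h1 : M.closure (A i) ⊆ M.closure I := by
          have := M.closure_subset_closure hsub
          rwa [M.closure_closure] at this
        exact hci (h1 (hc2 i (by simp [hi])))
      obtain ⟨a, haA, haI⟩ := Set.not_subset.1 this
      have haE : a ∈ M.E := hA i haA
      have hanotI : a ∉ I := fun h => haI (M.subset_closure I hIind.subset_ground h)
      have hins : M.Indep (insert a I) :=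
        (hIind.insert_indep_iff_of_notMem hanotI).2 ⟨haE, haI⟩
      set c' : Fin ℓ → α := Function.update c i a with hc'
      have hc'j : ∀ j : Fin ℓ, j ≠ i → c' j = c j := fun j hj =>
        Function.update_of_ne hj a c
      have hc'i : c' i = a := Function.update_self i a c
      have hc'inj : Function.Injective c' := by
        intro x y hxy
        by_cases hx : x = i <;> by_cases hy : y = i
        · rw [hx, hy]
        · exfalso
          rw [hx, hc'i, hc'j y hy] at hxy
          exact hanotI ⟨⟨y, hxy.symm⟩, fun h => hy (hcinj (hxy ▸ h : c y = c i))⟩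
        · exfalso
          rw [hy, hc'i, hc'j x hx] at hxy
          exact hanotI ⟨⟨x, hxy⟩, fun h => hx (hcinj ((hxy.trans h : c x = c i)))⟩
        · rw [hc'j x hx, hc'j y hy] at hxy
          exact hcinj hxy
      have hrange : Set.range c' ⊆ insert a I := by
        rintro _ ⟨x, rfl⟩
        by_cases hx : x = i
        · rw [hx, hc'i]; exact Set.mem_insert _ _
        · rw [hc'j x hx]
          exact Set.mem_insert_of_mem _ ⟨⟨x, rfl⟩, fun h => hx (hcinj h)⟩
      refine ih c' hc'inj ?_ ?_ (hins.subset hrange)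
      · intro j hj
        rcases eq_or_ne j i with rfl | hji
        · rwa [hc'i]
        · rw [hc'j j hji]
          refine hc1 j ?_
          have : (j : ℕ) ≠ k := fun h => hji (Fin.ext h)
          omega
      · intro j hj
        have hji : j ≠ i := by
          intro h
          rw [h] at hj
          simp only [hi] at hj
          omega
        rw [hc'j j hji]
        exact hc2 j (by omega)
end

section
/- Let T be a finite set with |T| ≥ 1, let ℓ = |T| − 1, and let S_1, …, S_ℓ be subsets of T. Then the following are equivalent: (i) |⋃_{i∈U} S_i| ≥ |U| + 1 for every nonempty subset U ⊆ {1,…,ℓ}; (ii) for every element i ∈ T there exists a bijection m : {1,…,ℓ} → T ∖ {i} such that m(j) ∈ S_j for all j ∈ {1,…,ℓ}. -/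
/-- **Dragon marriage condition.** Let `T` be a finite set with `|T| ≥ 1`, let `ℓ = |T| - 1`,
and let `S_1, …, S_ℓ` be subsets of `T`.  Then `|⋃_{i ∈ U} S_i| ≥ |U| + 1` for every nonempty
`U ⊆ {1, …, ℓ}` if and only if, for every `i ∈ T`, there is a bijection
`m : {1, …, ℓ} → T ∖ {i}` with `m j ∈ S j` for all `j`. -/
theorem dragon_marriage {α : Type*} [DecidableEq α] (T : Finset α) (hT : 1 ≤ T.card)
    (S : Fin (T.card - 1) → Finset α) (hS : ∀ j, S j ⊆ T) :
    (∀ U : Finset (Fin (T.card - 1)), U.Nonempty → U.card + 1 ≤ (U.biUnion S).card) ↔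
      (∀ i ∈ T, ∃ m : Fin (T.card - 1) ≃ {x // x ∈ T.erase i},
        ∀ j, (m j : α) ∈ S j) := by
  constructor
  · intro h i hi
    have hall : ∀ U : Finset (Fin (T.card - 1)),
        U.card ≤ (U.biUnion fun j => (S j).erase i).card := by
      intro U
      rcases U.eq_empty_or_nonempty with rfl | hU
      · simp
      · have h1 := h U hU
        have hsub : (U.biUnion S).erase i ⊆ U.biUnion fun j => (S j).erase i := by
          intro x hx
          rw [Finset.mem_erase, Finset.mem_biUnion] at hx
          obtain ⟨hne, j, hj, hxj⟩ := hx
          exact Finset.mem_biUnion.2 ⟨j, hj, Finset.mem_erase.2 ⟨hne, hxj⟩⟩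
        have hc1 := Finset.card_le_card hsub
        have hc2 : (U.biUnion S).card - 1 ≤ ((U.biUnion S).erase i).card := by
          by_cases hmem : i ∈ U.biUnion S
          · rw [Finset.card_erase_of_mem hmem]
          · rw [Finset.erase_eq_of_notMem hmem]; omega
        omega
    obtain ⟨f, hfinj, hf⟩ :=
      (Finset.all_card_le_biUnion_card_iff_existsInjective'
        (fun j => (S j).erase i)).1 hall
    have hfT : ∀ j, f j ∈ T.erase i := by
      intro j
      have := hf j
      rw [Finset.mem_erase] at this ⊢
      exact ⟨this.1, hS j this.2⟩
    let g : Fin (T.card - 1) → {x // x ∈ T.erase i} := fun j => ⟨f j, hfT j⟩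
    have hginj : Function.Injective g := fun a b hab => hfinj (congrArg Subtype.val hab)
    have hcard : Fintype.card (Fin (T.card - 1)) = Fintype.card {x // x ∈ T.erase i} := by
      simp [Fintype.card_coe, Finset.card_erase_of_mem hi]
    have hgbij : Function.Bijective g :=
      (Fintype.bijective_iff_injective_and_card g).2 ⟨hginj, hcard⟩
    refine ⟨Equiv.ofBijective g hgbij, fun j => ?_⟩
    have := hf j
    rw [Finset.mem_erase] at this
    exact this.2
  · intro h U hU
    -- first get some element of T
    obtain ⟨i0, hi0⟩ := Finset.card_pos.1 hT
    obtain ⟨m0, hm0⟩ := h i0 hi0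
    obtain ⟨j0, hj0⟩ := hU
    set i : α := (m0 j0 : α) with hidef
    have hiT : i ∈ T := hS j0 (hm0 j0)
    have hiU : i ∈ U.biUnion S := Finset.mem_biUnion.2 ⟨j0, hj0, hm0 j0⟩
    obtain ⟨m, hm⟩ := h i hiT
    have hmaps : ∀ j ∈ U, (m j : α) ∈ (U.biUnion S).erase i := by
      intro j hj
      refine Finset.mem_erase.2 ⟨?_, Finset.mem_biUnion.2 ⟨j, hj, hm j⟩⟩
      exact ((m j).2 |> Finset.mem_erase.1).1
    have hinj : Set.InjOn (fun j => (m j : α)) U := by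
      intro a _ b _ hab
      exact m.injective (Subtype.ext hab)
    have hle := Finset.card_le_card_of_injOn _ hmaps hinj
    have := Finset.card_erase_of_mem hiU
    have hpos : 1 ≤ (U.biUnion S).card := Finset.card_pos.2 ⟨i, hiU⟩
    omega
end

section
/- Let n ≥ 4 be an integer and let S_1, …, S_{n-3} be 4-element subsets of {1,…,n} satisfying the Cerberus condition, with S_1 = {1,2,3,4}. Then there exists a partition {1,…,n} = P ⊔ Q with {1,2} ⊆ P and {3,4} ⊆ Q such that: (1) |S_j ∩ P| ≠ 2 for all j ∈ {2,…,n−3}; (2) the number of indices j ∈ {2,…,n−3} with |S_j ∩ P| ≥ 3 equals |P| − 2 (equivalently, the number with |S_j ∩ Q| ≥ 3 equals |Q| − 2); and (3) with ⋆ a new element not in {1,…,n}, defining for each j ∈ {2,…,n−3} with |S_j ∩ P| ≥ 3 the set T_j = S_j if S_j ⊆ P and T_j = (S_j ∩ P) ∪ {⋆} if |S_j ∩ P| = 3, the resulting collection of sets satisfies |⋃_{j∈J} T_j| ≥ |J| + 3 for every nonempty set J of such indices; and the analogous collection formed from the indices j with |S_j ∩ Q| ≥ 3 inside Q ∪ {⋆}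 satisfies the same inequalities. -/
open Finset

-- assume stage1 present; for compile test, include it

open Finset

lemma card_inter_partition {A P Q : Finset ℕ} (hd : Disjoint P Q) (hsub : A ⊆ P ∪ Q) :
    (A ∩ P).card + (A ∩ Q).card = A.card := by
  have hU : (A ∩ P) ∪ (A ∩ Q) = A := by
    ext a
    simp only [Finset.mem_union, Finset.mem_inter]
    constructor
    · rintro (⟨h, _⟩ | ⟨h, _⟩) <;> exact h
    · intro h
      rcases Finset.mem_union.mp (hsub h) with h' | h'
      · exact Or.inl ⟨h, h'⟩
      · exact Or.inr ⟨h, h'⟩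
  have hdisj : Disjoint (A ∩ P) (A ∩ Q) :=
    hd.mono Finset.inter_subset_right Finset.inter_subset_right
  rw [← Finset.card_union_of_disjoint hdisj, hU]

lemma PQ_disjoint {W X : Finset ℕ} (hXW : X ⊆ W)
    (hWR : ∀ y ∈ W, y ∉ ({1,2,3,4} : Finset ℕ)) :
    Disjoint (X ∪ {1,2}) ((W \ X) ∪ ({3,4} : Finset ℕ)) := by
  rw [Finset.disjoint_left]
  intro a ha hb
  simp only [Finset.mem_union, Finset.mem_sdiff, Finset.mem_insert, Finset.mem_singleton] at ha hb
  rcases ha with haX | ha12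
  · have h4 := hWR a (hXW haX)
    simp only [Finset.mem_insert, Finset.mem_singleton] at h4
    push_neg at h4
    rcases hb with ⟨_, hnX⟩ | h34
    · exact hnX haX
    · rcases h34 with rfl | rfl <;> omega
  · rcases hb with ⟨haW, _⟩ | h34
    · have h4 := hWR a haW
      simp only [Finset.mem_insert, Finset.mem_singleton] at h4
      push_neg at h4
      rcases ha12 with rfl | rfl <;> omega
    · rcases ha12 with rfl | rfl <;> rcases h34 with h | h <;> omega

lemma PQ_union {W X : Finset ℕ} (hXW : X ⊆ W) :
    (X ∪ {1,2}) ∪ ((W \ X) ∪ ({3,4} : Finset ℕ)) = W ∪ {1,2,3,4} := by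
  ext a
  have hXa := @hXW a
  simp only [Finset.mem_union, Finset.mem_sdiff, Finset.mem_insert, Finset.mem_singleton]
  constructor
  · rintro ((h | h) | (⟨h, _⟩ | h)) <;> tauto
  · rintro (h | h)
    · by_cases hX : a ∈ X <;> tauto
    · tauto

/-- the "star" term: `0` if all parents of members of `J` lie in `P`, else `1`. -/
def starSide (par : ℕ → Finset ℕ) (P J : Finset ℕ) : ℕ :=
  if ∀ x ∈ J, par x ⊆ P then 0 else 1

lemma starSide_le_one {par : ℕ → Finset ℕ} {P J : Finset ℕ} : starSide par P J ≤ 1 := by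
  unfold starSide; split <;> omega

lemma starSide_pos {par : ℕ → Finset ℕ} {P J : Finset ℕ} (h : ¬ ∀ x ∈ J, par x ⊆ P) :
    starSide par P J = 1 := by
  unfold starSide; rw [if_neg h]

lemma starSide_zero {par : ℕ → Finset ℕ} {P J : Finset ℕ} (h : ∀ x ∈ J, par x ⊆ P) :
    starSide par P J = 0 := by
  unfold starSide; rw [if_pos h]

/-- the conditions on one side of the partition: `P` is the side, `Y = P ∩ W`. -/
def goodSide (par : ℕ → Finset ℕ) (P Y : Finset ℕ) : Prop :=
  (∀ x ∈ Y, 2 ≤ ((par x) ∩ P).card) ∧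
  ∀ J ⊆ Y, J.Nonempty → 3 ≤ (((J.biUnion par) ∩ P) \ J).card + starSide par P J

lemma three_le_of_all_sub {par : ℕ → Finset ℕ} {W P J : Finset ℕ}
    (H : ∀ J ⊆ W, J.Nonempty → 3 ≤ ((J.biUnion par) \ J).card)
    (hJW : J ⊆ W) (hne : J.Nonempty) (hall : ∀ x ∈ J, par x ⊆ P) :
    3 ≤ (((J.biUnion par) ∩ P) \ J).card + starSide par P J := by
  have h1 : J.biUnion par ∩ P = J.biUnion par :=
    Finset.inter_eq_left.mpr (Finset.biUnion_subset.mpr hall)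
  rw [h1]
  have := H J hJW hne
  omega

lemma claimA (par : ℕ → Finset ℕ) (W X : Finset ℕ) (hXW : X ⊆ W)
    (hWR : ∀ y ∈ W, y ∉ ({1,2,3,4} : Finset ℕ))
    (H : ∀ J ⊆ W, J.Nonempty → 3 ≤ ((J.biUnion par) \ J).card)
    (hgood : goodSide par (X ∪ {1,2}) X)
    (x : ℕ) (hxW : x ∈ W) (hxX : x ∉ X)
    (h2 : 2 ≤ ((par x) ∩ (X ∪ {1,2})).card) :
    goodSide par (insert x X ∪ {1,2}) (insert x X) := by
  set P := X ∪ ({1,2} : Finset ℕ) with hP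
  have hxP : x ∉ P := by
    have h4 := hWR x hxW
    simp only [Finset.mem_insert, Finset.mem_singleton] at h4
    push_neg at h4
    simp only [hP, Finset.mem_union, Finset.mem_insert, Finset.mem_singleton]
    push_neg
    exact ⟨hxX, h4.1, h4.2.1⟩
  have hP' : insert x X ∪ ({1,2} : Finset ℕ) = insert x P := by
    rw [hP, Finset.insert_union]
  have hxXW : insert x X ⊆ W := Finset.insert_subset hxW hXW
  rw [hP']
  constructor
  · intro y hy
    rcases Finset.mem_insert.mp hy with rfl | hyX
    · refine le_trans h2 (Finset.card_le_card ?_)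
      exact Finset.inter_subset_inter (le_refl _) (Finset.subset_insert _ _)
    · refine le_trans (hgood.1 y hyX) (Finset.card_le_card ?_)
      exact Finset.inter_subset_inter (le_refl _) (Finset.subset_insert _ _)
  · intro J hJ hne
    by_cases hstar : ∀ y ∈ J, par y ⊆ insert x P
    · exact three_le_of_all_sub H (hJ.trans hxXW) hne hstar
    · rw [starSide_pos hstar]
      suffices h : 2 ≤ ((J.biUnion par ∩ insert x P) \ J).card by omega
      by_cases hxJ : x ∈ J
      · by_cases hJ₀ne : (J.erase x).Nonempty
        · set J₀ := J.erase x with hJ₀def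
          have hJ₀X : J₀ ⊆ X := by
            intro y hy
            obtain ⟨hyx, hyJ⟩ := Finset.mem_erase.mp hy
            exact (Finset.mem_insert.mp (hJ hyJ)).resolve_left hyx
          have hsub : ((J₀.biUnion par ∩ P) \ J₀) ⊆ ((J.biUnion par ∩ insert x P) \ J) := by
            intro p hp
            simp only [Finset.mem_sdiff, Finset.mem_inter, Finset.mem_biUnion] at hp ⊢
            obtain ⟨⟨⟨y, hyJ₀, hypar⟩, hpP⟩, hpJ₀⟩ := hp
            have hpx : p ≠ x := fun h => hxP (h ▸ hpP)
            refine ⟨⟨⟨y, Finset.erase_subset x J hyJ₀, hypar⟩, Finset.mem_insert_of_mem hpP⟩, ?_⟩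
            intro hpJ
            exact hpJ₀ (Finset.mem_erase.mpr ⟨hpx, hpJ⟩)
          have hlow : 2 ≤ ((J₀.biUnion par ∩ P) \ J₀).card := by
            by_cases hstar₀ : ∀ y ∈ J₀, par y ⊆ P
            · have heq : J₀.biUnion par ∩ P = J₀.biUnion par :=
                Finset.inter_eq_left.mpr (Finset.biUnion_subset.mpr hstar₀)
              rw [heq]
              have h4 := H J₀ (hJ₀X.trans hXW) hJ₀ne
              omega
            · have h3 := hgood.2 J₀ hJ₀X hJ₀ne
              rw [starSide_pos hstar₀] at h3
              omega
          exact le_trans hlow (Finset.card_le_card hsub)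
        · have hJx : J = {x} := by
            apply Finset.eq_singleton_iff_unique_mem.mpr
            refine ⟨hxJ, fun y hy => ?_⟩
            by_contra hne'
            exact hJ₀ne ⟨y, Finset.mem_erase.mpr ⟨hne', hy⟩⟩
          have hsub : (par x ∩ P) ⊆ ((J.biUnion par ∩ insert x P) \ J) := by
            intro p hp
            obtain ⟨hp1, hp2⟩ := Finset.mem_inter.mp hp
            rw [hJx]
            simp only [Finset.mem_sdiff, Finset.mem_inter, Finset.singleton_biUnion,
              Finset.mem_singleton]
            exact ⟨⟨hp1, Finset.mem_insert_of_mem hp2⟩, fun h => hxP (h ▸ hp2)⟩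
          exact le_trans h2 (Finset.card_le_card hsub)
      · have hJX : J ⊆ X := fun y hy =>
          (Finset.mem_insert.mp (hJ hy)).resolve_left (by rintro rfl; exact hxJ hy)
        have h3 := hgood.2 J hJX hne
        have hstar₁ : ¬ ∀ y ∈ J, par y ⊆ P := fun h =>
          hstar (fun y hy => (h y hy).trans (Finset.subset_insert _ _))
        rw [starSide_pos hstar₁] at h3
        have hsub : ((J.biUnion par ∩ P) \ J) ⊆ ((J.biUnion par ∩ insert x P) \ J) := by
          intro p hp
          simp only [Finset.mem_sdiff, Finset.mem_inter] at hp ⊢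
          exact ⟨⟨hp.1.1, Finset.mem_insert_of_mem hp.1.2⟩, hp.2⟩
        have := Finset.card_le_card hsub
        omega

lemma claimB (par : ℕ → Finset ℕ) (W X Jv : Finset ℕ) (hXW : X ⊆ W)
    (hWR : ∀ y ∈ W, y ∉ ({1,2,3,4} : Finset ℕ))
    (hpar3 : ∀ x ∈ W, (par x).card = 3)
    (hsub : ∀ x ∈ W, par x ⊆ W ∪ {1,2,3,4})
    (H : ∀ J ⊆ W, J.Nonempty → 3 ≤ ((J.biUnion par) \ J).card)
    (hgood : goodSide par (X ∪ {1,2}) X)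
    (hJv : Jv ⊆ W \ X) (hJvne : Jv.Nonempty)
    (hviol : ((Jv.biUnion par ∩ ((W \ X) ∪ {3,4})) \ Jv).card
        + starSide par ((W \ X) ∪ {3,4}) Jv ≤ 2)
    (hmin : ∀ K ⊆ Jv, K ≠ Jv → K.Nonempty →
        3 ≤ ((K.biUnion par ∩ ((W \ X) ∪ {3,4})) \ K).card + starSide par ((W \ X) ∪ {3,4}) K) :
    goodSide par ((X ∪ Jv) ∪ {1,2}) (X ∪ Jv) := by
  set P := X ∪ ({1,2} : Finset ℕ) with hPdef
  set Q := (W \ X) ∪ ({3,4} : Finset ℕ) with hQdef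
  have hJvW : Jv ⊆ W := hJv.trans (Finset.sdiff_subset)
  have hJvQ : Jv ⊆ Q := hJv.trans Finset.subset_union_left
  have hdisj : Disjoint P Q := PQ_disjoint hXW hWR
  have hJvP : ∀ y ∈ Jv, y ∉ P := fun y hy hyP => (Finset.disjoint_left.mp hdisj hyP (hJvQ hy))
  have hP' : (X ∪ Jv) ∪ ({1,2} : Finset ℕ) = P ∪ Jv := by
    rw [hPdef]; ext a
    simp only [Finset.mem_union]; tauto
  have hXJvW : X ∪ Jv ⊆ W := Finset.union_subset hXW hJvW
  have hparPQ : ∀ y ∈ W, par y ⊆ P ∪ Q := by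
    intro y hy
    refine (hsub y hy).trans ?_
    rw [hPdef, hQdef, PQ_union hXW]
  -- star on Q of Jv is 1, and the external Q-parents of Jv form a set of size ≤ 1
  have hE1 : ((Jv.biUnion par ∩ Q) \ Jv).card ≤ 1 := by
    by_cases hall : ∀ y ∈ Jv, par y ⊆ Q
    · exfalso
      have h1 : Jv.biUnion par ∩ Q = Jv.biUnion par :=
        Finset.inter_eq_left.mpr (Finset.biUnion_subset.mpr hall)
      have h2 := H Jv hJvW hJvne
      rw [h1] at hviol
      omega
    · have hs := starSide_pos (par := par) (P := Q) (J := Jv) hall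
      omega
  rw [hP']
  constructor
  · -- (i): each element of X ∪ Jv has ≥ 2 parents in P ∪ Jv
    intro y hy
    rcases Finset.mem_union.mp hy with hyX | hyJv
    · refine le_trans (hgood.1 y hyX) (Finset.card_le_card ?_)
      exact Finset.inter_subset_inter (le_refl _) Finset.subset_union_left
    · -- y ∈ Jv
      have hyW : y ∈ W := hJvW hyJv
      have hcover : par y ⊆ (P ∪ Jv) ∪ (Q \ Jv) := by
        intro p hp
        rcases Finset.mem_union.mp (hparPQ y hyW hp) with h | h
        · exact Finset.mem_union_left _ (Finset.mem_union_left _ h)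
        · by_cases hj : p ∈ Jv
          · exact Finset.mem_union_left _ (Finset.mem_union_right _ hj)
          · exact Finset.mem_union_right _ (Finset.mem_sdiff.mpr ⟨h, hj⟩)
      have hdisj2 : Disjoint (P ∪ Jv) (Q \ Jv) := by
        rw [Finset.disjoint_left]
        intro a ha hb
        obtain ⟨haQ, haJv⟩ := Finset.mem_sdiff.mp hb
        rcases Finset.mem_union.mp ha with h | h
        · exact Finset.disjoint_left.mp hdisj h haQ
        · exact haJv h
      have hpart := card_inter_partition hdisj2 hcover
      rw [hpar3 y hyW] at hpart
      have hEsub : par y ∩ (Q \ Jv) ⊆ ((Jv.biUnion par ∩ Q) \ Jv) := by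
        intro p hp
        obtain ⟨hp1, hp2⟩ := Finset.mem_inter.mp hp
        obtain ⟨hpQ, hpJv⟩ := Finset.mem_sdiff.mp hp2
        exact Finset.mem_sdiff.mpr ⟨Finset.mem_inter.mpr
          ⟨Finset.mem_biUnion.mpr ⟨y, hyJv, hp1⟩, hpQ⟩, hpJv⟩
      have := Finset.card_le_card hEsub
      omega
  · -- (iii)
    intro K hK hKne
    by_cases hstar' : ∀ y ∈ K, par y ⊆ P ∪ Jv
    · exact three_le_of_all_sub H (hK.trans hXJvW) hKne hstar'
    · rw [starSide_pos hstar']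
      suffices h : 2 ≤ ((K.biUnion par ∩ (P ∪ Jv)) \ K).card by omega
      by_cases hK₀ : (K ∩ X).Nonempty
      · -- use the old P-side condition on K ∩ X
        set K₀ := K ∩ X with hK₀def
        have h3 := hgood.2 K₀ Finset.inter_subset_right hK₀
        have hlow : 2 ≤ ((K₀.biUnion par ∩ P) \ K₀).card := by
          by_cases hstar₀ : ∀ y ∈ K₀, par y ⊆ P
          · have heq : K₀.biUnion par ∩ P = K₀.biUnion par :=
              Finset.inter_eq_left.mpr (Finset.biUnion_subset.mpr hstar₀)
            rw [heq]
            have h4 := H K₀ (Finset.inter_subset_right.trans hXW) hK₀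
            omega
          · rw [starSide_pos hstar₀] at h3
            omega
        refine le_trans hlow (Finset.card_le_card ?_)
        intro p hp
        simp only [Finset.mem_sdiff, Finset.mem_inter, Finset.mem_biUnion] at hp ⊢
        obtain ⟨⟨⟨y, hyK₀, hypar⟩, hpP⟩, hpK₀⟩ := hp
        refine ⟨⟨⟨y, (Finset.inter_subset_left hyK₀), hypar⟩, Finset.mem_union_left _ hpP⟩, ?_⟩
        intro hpK
        rcases Finset.mem_union.mp (hK hpK) with h | h
        · exact hpK₀ (Finset.mem_inter.mpr ⟨hpK, h⟩)
        · exact (Finset.disjoint_left.mp hdisj hpP (hJvQ h))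
      · -- K ⊆ Jv
        have hKJv : K ⊆ Jv := by
          intro y hy
          rcases Finset.mem_union.mp (hK hy) with h | h
          · exact absurd ⟨y, Finset.mem_inter.mpr ⟨hy, h⟩⟩ hK₀
          · exact h
        have hKQ : K ⊆ Q := hKJv.trans hJvQ
        have hKP : ∀ p ∈ P, p ∉ K := fun p hp hpK =>
          Finset.disjoint_left.mp hdisj hp (hKQ hpK)
        by_cases hKeq : K = Jv
        · -- K = Jv : use H and hE1
          subst hKeq
          set B := K.biUnion par \ K with hBdef
          have hBsub : B ⊆ P ∪ Q := by
            intro p hp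
            obtain ⟨hp1, _⟩ := Finset.mem_sdiff.mp hp
            obtain ⟨y, hyK, hypar⟩ := Finset.mem_biUnion.mp hp1
            exact hparPQ y (hJvW hyK) hypar
          have hpart := card_inter_partition hdisj hBsub
          have hBQ : B ∩ Q = (K.biUnion par ∩ Q) \ K := by
            rw [hBdef]; ext p
            simp only [Finset.mem_inter, Finset.mem_sdiff]; tauto
          have hB3 := H K hJvW hJvne
          rw [hBQ] at hpart
          have hBP2 : 2 ≤ (B ∩ P).card := by
            rw [hBdef] at hpart ⊢
            omega
          refine le_trans hBP2 (Finset.card_le_card ?_)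
          intro p hp
          obtain ⟨hp1, hpP⟩ := Finset.mem_inter.mp hp
          obtain ⟨hp2, hpK⟩ := Finset.mem_sdiff.mp hp1
          exact Finset.mem_sdiff.mpr ⟨Finset.mem_inter.mpr ⟨hp2, Finset.mem_union_left _ hpP⟩, hpK⟩
        · -- K ⊊ Jv : use minimality
          have h3 := hmin K hKJv hKeq hKne
          set D := (K.biUnion par) ∩ (Jv \ K) with hDdef
          have hDsub : D ⊆ (K.biUnion par ∩ (P ∪ Jv)) \ K := by
            intro p hp
            obtain ⟨hp1, hp2⟩ := Finset.mem_inter.mp hp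
            obtain ⟨hpJv, hpK⟩ := Finset.mem_sdiff.mp hp2
            exact Finset.mem_sdiff.mpr ⟨Finset.mem_inter.mpr ⟨hp1, Finset.mem_union_right _ hpJv⟩, hpK⟩
          have hNQsub : (K.biUnion par ∩ Q) \ K ⊆ ((Jv.biUnion par ∩ Q) \ Jv) ∪ D := by
            intro p hp
            obtain ⟨hp1, hpK⟩ := Finset.mem_sdiff.mp hp
            obtain ⟨hp2, hpQ⟩ := Finset.mem_inter.mp hp1
            by_cases hpJv : p ∈ Jv
            · exact Finset.mem_union_right _
                (Finset.mem_inter.mpr ⟨hp2, Finset.mem_sdiff.mpr ⟨hpJv, hpK⟩⟩)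
            · refine Finset.mem_union_left _ (Finset.mem_sdiff.mpr ⟨Finset.mem_inter.mpr ⟨?_, hpQ⟩, hpJv⟩)
              obtain ⟨y, hyK, hypar⟩ := Finset.mem_biUnion.mp hp2
              exact Finset.mem_biUnion.mpr ⟨y, hKJv hyK, hypar⟩
          have hNQcard := Finset.card_le_card hNQsub
          have hunion := Finset.card_union_le ((Jv.biUnion par ∩ Q) \ Jv) D
          by_cases hsQ : ∀ y ∈ K, par y ⊆ Q
          · -- star_Q K = 0, so |N_Q K| ≥ 3, so |D| ≥ 2
            have hs0 := starSide_zero (par := par) (P := Q) (J := K) hsQ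
            rw [hs0] at h3
            have hD2 : 2 ≤ D.card := by omega
            exact le_trans hD2 (Finset.card_le_card hDsub)
          · -- star_Q K = 1: |D| ≥ 1 plus one explicit P-parent
            have hs1 := starSide_pos (par := par) (P := Q) (J := K) hsQ
            rw [hs1] at h3
            have hD1 : 1 ≤ D.card := by omega
            push_neg at hsQ
            obtain ⟨y, hyK, hynsub⟩ := hsQ
            obtain ⟨p, hppar, hpQ⟩ := Finset.not_subset.mp hynsub
            have hpP : p ∈ P := by
              rcases Finset.mem_union.mp (hparPQ y (hJvW (hKJv hyK)) hppar) with h | h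
              · exact h
              · exact absurd h hpQ
            have hpD : p ∉ D := by
              intro hp
              obtain ⟨_, hp2⟩ := Finset.mem_inter.mp hp
              exact hpQ (hJvQ (Finset.mem_sdiff.mp hp2).1)
            have hins : insert p D ⊆ (K.biUnion par ∩ (P ∪ Jv)) \ K := by
              apply Finset.insert_subset _ hDsub
              refine Finset.mem_sdiff.mpr ⟨Finset.mem_inter.mpr
                ⟨Finset.mem_biUnion.mpr ⟨y, hyK, hppar⟩, Finset.mem_union_left _ hpP⟩, hKP p hpP⟩
            have := Finset.card_le_card hins
            rw [Finset.card_insert_of_notMem hpD] at this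
            omega

lemma exists_coloring (par : ℕ → Finset ℕ) (W : Finset ℕ)
    (hWR : ∀ y ∈ W, y ∉ ({1,2,3,4} : Finset ℕ))
    (hpar3 : ∀ x ∈ W, (par x).card = 3)
    (hsub : ∀ x ∈ W, par x ⊆ W ∪ {1,2,3,4})
    (H : ∀ J ⊆ W, J.Nonempty → 3 ≤ ((J.biUnion par) \ J).card) :
    ∃ X ⊆ W, goodSide par (X ∪ {1,2}) X ∧ goodSide par ((W \ X) ∪ {3,4}) (W \ X) := by
  classical
  set F := W.powerset.filter (fun X => goodSide par (X ∪ {1,2}) X) with hF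
  have hFne : F.Nonempty := by
    refine ⟨∅, Finset.mem_filter.mpr ⟨Finset.mem_powerset.mpr (Finset.empty_subset _), ?_, ?_⟩⟩
    · intro x hx; exact absurd hx (Finset.notMem_empty x)
    · intro J hJ hJne
      exact absurd (Finset.subset_empty.mp hJ) (Finset.nonempty_iff_ne_empty.mp hJne)
  obtain ⟨X, hXF, hmax⟩ := F.exists_max_image Finset.card hFne
  have hXW : X ⊆ W := Finset.mem_powerset.mp (Finset.mem_filter.mp hXF).1
  have hgoodP : goodSide par (X ∪ {1,2}) X := (Finset.mem_filter.mp hXF).2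
  refine ⟨X, hXW, hgoodP, ?_, ?_⟩
  · -- (i) for the Q side
    intro x hx
    obtain ⟨hxW, hxX⟩ := Finset.mem_sdiff.mp hx
    by_contra hlt
    push_neg at hlt
    have hsubx : par x ⊆ (X ∪ {1,2}) ∪ ((W \ X) ∪ {3,4}) := by
      refine (hsub x hxW).trans ?_
      rw [PQ_union hXW]
    have hpart := card_inter_partition (PQ_disjoint hXW hWR) hsubx
    rw [hpar3 x hxW] at hpart
    have h2 : 2 ≤ (par x ∩ (X ∪ {1,2})).card := by omega
    have hA := claimA par W X hXW hWR H hgoodP x hxW hxX h2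
    have hmem : insert x X ∈ F := Finset.mem_filter.mpr
      ⟨Finset.mem_powerset.mpr (Finset.insert_subset hxW hXW), hA⟩
    have := hmax _ hmem
    rw [Finset.card_insert_of_notMem hxX] at this
    omega
  · -- (iii) for the Q side
    intro J hJ hJne
    by_contra hlt
    push_neg at hlt
    set V := (W \ X).powerset.filter (fun K => K.Nonempty ∧
        ((K.biUnion par ∩ ((W \ X) ∪ {3,4})) \ K).card + starSide par ((W \ X) ∪ {3,4}) K ≤ 2)
      with hV
    have hVne : V.Nonempty := by
      refine ⟨J, Finset.mem_filter.mpr ⟨Finset.mem_powerset.mpr hJ, hJne, ?_⟩⟩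
      omega
    obtain ⟨Jm, hJmV, hJmin⟩ := V.exists_min_image Finset.card hVne
    obtain ⟨hJmP, hJmne, hJmviol⟩ := Finset.mem_filter.mp hJmV
    have hJmsub : Jm ⊆ W \ X := Finset.mem_powerset.mp hJmP
    have hmin : ∀ K ⊆ Jm, K ≠ Jm → K.Nonempty →
        3 ≤ ((K.biUnion par ∩ ((W \ X) ∪ {3,4})) \ K).card + starSide par ((W \ X) ∪ {3,4}) K := by
      intro K hK hKne hKnonempty
      by_contra hKlt
      push_neg at hKlt
      have hKV : K ∈ V := Finset.mem_filter.mpr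
        ⟨Finset.mem_powerset.mpr (hK.trans hJmsub), hKnonempty, by omega⟩
      have hle := hJmin _ hKV
      have hlt' : K.card < Jm.card := Finset.card_lt_card (Finset.ssubset_iff_subset_ne.mpr ⟨hK, hKne⟩)
      omega
    have hB := claimB par W X Jm hXW hWR hpar3 hsub H hgoodP hJmsub hJmne hJmviol hmin
    have hdisjXJm : Disjoint X Jm := by
      rw [Finset.disjoint_left]
      intro a ha hb
      exact (Finset.mem_sdiff.mp (hJmsub hb)).2 ha
    have hmem : X ∪ Jm ∈ F := Finset.mem_filter.mpr
      ⟨Finset.mem_powerset.mpr (Finset.union_subset hXW (hJmsub.trans Finset.sdiff_subset)), hB⟩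
    have hle := hmax _ hmem
    rw [Finset.card_union_of_disjoint hdisjXJm] at hle
    obtain ⟨y, hy⟩ := hJmne
    have : 0 < Jm.card := Finset.card_pos.mpr ⟨y, hy⟩
    omega

lemma count_side {m : ℕ} (S : Fin m → Finset ℕ) (i0 : Fin m) (F' : Fin m → ℕ)
    (P Y : Finset ℕ)
    (hchar : ∀ i, i ≠ i0 → (3 ≤ (S i ∩ P).card ↔ F' i ∈ Y))
    (hinj : ∀ i j, i ≠ i0 → j ≠ i0 → F' i = F' j → i = j)
    (hsurj : ∀ x ∈ Y, ∃ i, i ≠ i0 ∧ F' i = x) :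
    (Finset.univ.filter (fun i => i ≠ i0 ∧ 3 ≤ (S i ∩ P).card)).card = Y.card := by
  apply Finset.card_bij (fun i _ => F' i)
  · intro i hi
    simp only [Finset.mem_filter] at hi
    exact (hchar i hi.2.1).mp hi.2.2
  · intro i hi j hj h
    simp only [Finset.mem_filter] at hi hj
    exact hinj _ _ hi.2.1 hj.2.1 h
  · intro x hx
    obtain ⟨i, hi, h⟩ := hsurj x hx
    refine ⟨i, ?_, h⟩
    simp only [Finset.mem_filter]
    exact ⟨Finset.mem_univ _, hi, (hchar i hi).mpr (h ▸ hx)⟩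

lemma cerb_side {m : ℕ} (S : Fin m → Finset ℕ) (i0 : Fin m) (F' : Fin m → ℕ)
    (par : ℕ → Finset ℕ) (P Y : Finset ℕ)
    (h0P : (0:ℕ) ∉ P) (h0Y : (0:ℕ) ∉ Y) (hYP : Y ⊆ P)
    (hFS : ∀ i, i ≠ i0 → F' i ∈ S i)
    (hparS : ∀ i, i ≠ i0 → par (F' i) = S i \ {F' i})
    (hchar : ∀ i, i ≠ i0 → (3 ≤ (S i ∩ P).card ↔ F' i ∈ Y))
    (hinj : ∀ i j, i ≠ i0 → j ≠ i0 → F' i = F' j → i = j)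
    (hgood : ∀ J ⊆ Y, J.Nonempty → 3 ≤ (((J.biUnion par) ∩ P) \ J).card + starSide par P J) :
    ∀ J : Finset (Fin m), (∀ i ∈ J, i ≠ i0 ∧ 3 ≤ (S i ∩ P).card) → J.Nonempty →
      J.card + 3 ≤ (J.biUnion (fun i => if S i ⊆ P then S i else insert 0 (S i ∩ P))).card := by
  intro J hJ hJne
  classical
  set T : Fin m → Finset ℕ := fun i => if S i ⊆ P then S i else insert 0 (S i ∩ P) with hT
  set Jv := J.image F' with hJv
  have hJvY : Jv ⊆ Y := by
    intro x hx
    obtain ⟨i, hiJ, rfl⟩ := Finset.mem_image.mp hx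
    exact (hchar i (hJ i hiJ).1).mp (hJ i hiJ).2
  have hJvcard : Jv.card = J.card :=
    Finset.card_image_of_injOn (fun i hi j hj h => hinj i j (hJ i hi).1 (hJ j hj).1 h)
  have hJvne : Jv.Nonempty := hJne.image _
  have hg := hgood Jv hJvY hJvne
  set N := ((Jv.biUnion par) ∩ P) \ Jv with hN
  have hsub1 : Jv ⊆ J.biUnion T := by
    intro x hx
    obtain ⟨i, hiJ, rfl⟩ := Finset.mem_image.mp hx
    refine Finset.mem_biUnion.mpr ⟨i, hiJ, ?_⟩
    rw [hT]
    dsimp only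
    split
    · exact hFS i (hJ i hiJ).1
    · exact Finset.mem_insert_of_mem (Finset.mem_inter.mpr
        ⟨hFS i (hJ i hiJ).1, hYP ((hchar i (hJ i hiJ).1).mp (hJ i hiJ).2)⟩)
  have hsub2 : N ⊆ J.biUnion T := by
    intro p hp
    rw [hN] at hp
    obtain ⟨hp1, hpJv⟩ := Finset.mem_sdiff.mp hp
    obtain ⟨hpb, hpP⟩ := Finset.mem_inter.mp hp1
    obtain ⟨x, hxJv, hpx⟩ := Finset.mem_biUnion.mp hpb
    obtain ⟨i, hiJ, rfl⟩ := Finset.mem_image.mp hxJv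
    have hpS : p ∈ S i := by
      rw [hparS i (hJ i hiJ).1] at hpx
      exact (Finset.mem_sdiff.mp hpx).1
    refine Finset.mem_biUnion.mpr ⟨i, hiJ, ?_⟩
    rw [hT]
    dsimp only
    split
    · exact hpS
    · exact Finset.mem_insert_of_mem (Finset.mem_inter.mpr ⟨hpS, hpP⟩)
  have hdisj1 : Disjoint Jv N := by
    rw [hN]
    exact Finset.disjoint_sdiff
  have hcard1 : (Jv ∪ N).card = Jv.card + N.card := Finset.card_union_of_disjoint hdisj1
  by_cases hstar : ∀ x ∈ Jv, par x ⊆ P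
  · rw [starSide_zero hstar] at hg
    have hsubU : Jv ∪ N ⊆ J.biUnion T := Finset.union_subset hsub1 hsub2
    have hcard := Finset.card_le_card hsubU
    rw [hcard1] at hcard
    omega
  · rw [starSide_pos hstar] at hg
    push_neg at hstar
    obtain ⟨x, hxJv, hxg⟩ := hstar
    obtain ⟨i, hiJ, hFi⟩ := Finset.mem_image.mp hxJv
    have h0 : (0:ℕ) ∈ J.biUnion T := by
      refine Finset.mem_biUnion.mpr ⟨i, hiJ, ?_⟩
      rw [hT]
      dsimp only
      rw [if_neg ?_]
      · exact Finset.mem_insert_self _ _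
      · intro hSP
        apply hxg
        rw [← hFi, hparS i (hJ i hiJ).1]
        exact Finset.sdiff_subset.trans hSP
    have h0JvN : (0:ℕ) ∉ Jv ∪ N := by
      intro h
      rcases Finset.mem_union.mp h with h | h
      · exact h0Y (hJvY h)
      · rw [hN] at h
        exact h0P (Finset.mem_inter.mp (Finset.mem_sdiff.mp h).1).2
    have hsubU : insert 0 (Jv ∪ N) ⊆ J.biUnion T :=
      Finset.insert_subset h0 (Finset.union_subset hsub1 hsub2)
    have hcard := Finset.card_le_card hsubU
    rw [Finset.card_insert_of_notMem h0JvN, hcard1] at hcard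
    omega




/-- The combinatorial statement of Remark 4.6: if `S_1, …, S_{n-3}` are 4-element subsets of
`{1, …, n}` satisfying the Cerberus condition with `S_1 = {1,2,3,4}`, then `{1, …, n}` can be
partitioned as `P ⊔ Q` with `{1,2} ⊆ P`, `{3,4} ⊆ Q`, such that (1) `|S_j ∩ P| ≠ 2` for all
`j ≥ 2`; (2) the number of `j ≥ 2` with `|S_j ∩ P| ≥ 3` is `|P| - 2` (equivalently, the
number with `|S_j ∩ Q| ≥ 3` is `|Q| - 2`); and (3) the induced set systems on `P ∪ {⋆}` and
`Q ∪ {⋆}` (here `⋆ = 0`, a new element not in `{1, …, n}`) satisfy the Cerberus inequalities.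
-/
theorem cerberus_splitting (n : ℕ) (hn : 4 ≤ n)
    (S : Fin (n - 3) → Finset ℕ) (hS : ∀ i, S i ⊆ Finset.Icc 1 n)
    (hcard : ∀ i, (S i).card = 4)
    (hC : ∀ J : Finset (Fin (n - 3)), J.Nonempty → J.card + 3 ≤ (J.biUnion S).card)
    (hS1 : S ⟨0, by omega⟩ = {1, 2, 3, 4}) :
    ∃ P Q : Finset ℕ, Disjoint P Q ∧ P ∪ Q = Finset.Icc 1 n ∧
      {1, 2} ⊆ P ∧ {3, 4} ⊆ Q ∧
      (∀ i : Fin (n - 3), i ≠ ⟨0, by omega⟩ → (S i ∩ P).card ≠ 2) ∧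
      (Finset.univ.filter
        (fun i : Fin (n - 3) => i ≠ ⟨0, by omega⟩ ∧ 3 ≤ (S i ∩ P).card)).card
          = P.card - 2 ∧
      (Finset.univ.filter
        (fun i : Fin (n - 3) => i ≠ ⟨0, by omega⟩ ∧ 3 ≤ (S i ∩ Q).card)).card
          = Q.card - 2 ∧
      (∀ J : Finset (Fin (n - 3)),
        (∀ i ∈ J, i ≠ ⟨0, by omega⟩ ∧ 3 ≤ (S i ∩ P).card) → J.Nonempty →
          J.card + 3 ≤
            (J.biUnion (fun i => if S i ⊆ P then S i else insert 0 (S i ∩ P))).card) ∧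
      (∀ J : Finset (Fin (n - 3)),
        (∀ i ∈ J, i ≠ ⟨0, by omega⟩ ∧ 3 ≤ (S i ∩ Q).card) → J.Nonempty →
          J.card + 3 ≤
            (J.biUnion (fun i => if S i ⊆ Q then S i else insert 0 (S i ∩ Q))).card) := by
  
  classical
  have hm0 : 0 < n - 3 := by omega
  set i0 : Fin (n - 3) := ⟨0, hm0⟩ with hi0
  set R : Finset ℕ := {1,2,3,4} with hRdef
  set W : Finset ℕ := Finset.Icc 1 n \ R with hWdef
  have hS10 : S i0 = R := hS1
  have hRIcc : R ⊆ Finset.Icc 1 n := by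
    intro a ha
    rw [hRdef] at ha
    simp only [Finset.mem_insert, Finset.mem_singleton] at ha
    rw [Finset.mem_Icc]
    rcases ha with rfl | rfl | rfl | rfl <;> omega
  have hWR : ∀ y ∈ W, y ∉ R := fun y hy => (Finset.mem_sdiff.mp hy).2
  have hWIcc : W ⊆ Finset.Icc 1 n := Finset.sdiff_subset
  have hRcard : R.card = 4 := by rw [hRdef]; rfl
  have hcardW : W.card = n - 4 := by
    rw [hWdef, Finset.card_sdiff_of_subset hRIcc, Nat.card_Icc, hRcard]
    omega
  -- Hall's theorem: a system of distinct representatives avoiding {1,2,3,4}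
  set t : {i : Fin (n-3) // i ≠ i0} → Finset ℕ := fun i => S i.1 \ R with htdef
  have hhall : ∀ s : Finset {i : Fin (n-3) // i ≠ i0}, s.card ≤ (s.biUnion t).card := by
    intro s
    set s' : Finset (Fin (n-3)) := insert i0 (s.image (fun i => i.1)) with hs'def
    have hi0img : i0 ∉ s.image (fun i => i.1) := by
      simp only [Finset.mem_image]
      rintro ⟨j, hj, hji⟩
      exact j.2 hji
    have hs'card : s'.card = s.card + 1 := by
      rw [hs'def, Finset.card_insert_of_notMem hi0img,
        Finset.card_image_of_injective _ Subtype.val_injective]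
    have hsub' : s'.biUnion S ⊆ (s.biUnion t) ∪ R := by
      intro a ha
      obtain ⟨i, hi, hai⟩ := Finset.mem_biUnion.mp ha
      rcases Finset.mem_insert.mp hi with rfl | hi'
      · rw [hS10] at hai
        exact Finset.mem_union_right _ hai
      · obtain ⟨j, hj, rfl⟩ := Finset.mem_image.mp hi'
        by_cases haR : a ∈ R
        · exact Finset.mem_union_right _ haR
        · refine Finset.mem_union_left _ (Finset.mem_biUnion.mpr ⟨j, hj, ?_⟩)
          simp only [htdef]
          exact Finset.mem_sdiff.mpr ⟨hai, haR⟩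
    have hC' := hC s' ⟨i0, Finset.mem_insert_self _ _⟩
    have h1 := Finset.card_le_card hsub'
    have h2 := Finset.card_union_le (s.biUnion t) R
    omega
  obtain ⟨f, hfinj, hft⟩ := (Finset.all_card_le_biUnion_card_iff_existsInjective' t).mp hhall
  have hfW : ∀ i, f i ∈ W := by
    intro i
    have h := hft i
    simp only [htdef] at h
    obtain ⟨h1, h2⟩ := Finset.mem_sdiff.mp h
    exact Finset.mem_sdiff.mpr ⟨hS i.1 h1, h2⟩
  have hcardι : Fintype.card {i : Fin (n-3) // i ≠ i0} = (n-3) - 1 := by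
    rw [Fintype.card_subtype, Finset.filter_ne', Finset.card_erase_of_mem (Finset.mem_univ _),
      Finset.card_univ, Fintype.card_fin]
  have himg : (Finset.univ.image f) = W := by
    apply Finset.eq_of_subset_of_card_le
    · intro a ha
      obtain ⟨i, _, rfl⟩ := Finset.mem_image.mp ha
      exact hfW i
    · rw [Finset.card_image_of_injective _ hfinj, Finset.card_univ, hcardι, hcardW]
      omega
  have hexW : ∀ x ∈ W, ∃ i, f i = x := by
    intro x hx
    rw [← himg] at hx
    obtain ⟨i, _, h⟩ := Finset.mem_image.mp hx
    exact ⟨i, h⟩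
  set par : ℕ → Finset ℕ := fun x => if h : ∃ i, f i = x then S (h.choose.1) \ {x} else ∅
    with hpardef
  set g : ℕ → Fin (n-3) := fun x => if h : ∃ i, f i = x then (h.choose).1 else i0 with hgdef
  set F' : Fin (n-3) → ℕ := fun i => if h : i = i0 then 0 else f ⟨i, h⟩ with hF'def
  have hF'ne : ∀ (i : Fin (n-3)) (h : i ≠ i0), F' i = f ⟨i, h⟩ := by
    intro i h
    simp only [hF'def]
    exact dif_neg h
  have hgW : ∀ x ∈ W, g x ≠ i0 ∧ F' (g x) = x := by
    intro x hx
    have h := hexW x hx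
    have hgx : g x = (h.choose).1 := by simp only [hgdef]; exact dif_pos h
    have hne : (h.choose).1 ≠ i0 := (h.choose).2
    refine ⟨by rw [hgx]; exact hne, ?_⟩
    rw [hgx, hF'ne _ hne]
    exact h.choose_spec
  have hgF : ∀ (i : Fin (n-3)), i ≠ i0 → g (F' i) = i := by
    intro i hi
    rw [hF'ne i hi]
    have h : ∃ j, f j = f ⟨i, hi⟩ := ⟨⟨i, hi⟩, rfl⟩
    have hgx : g (f ⟨i, hi⟩) = (h.choose).1 := by simp only [hgdef]; exact dif_pos h
    rw [hgx, hfinj h.choose_spec]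
  have hparx : ∀ x ∈ W, par x = S (g x) \ {x} := by
    intro x hx
    have h := hexW x hx
    have h1 : par x = S (h.choose.1) \ {x} := by simp only [hpardef]; exact dif_pos h
    have h2 : g x = (h.choose).1 := by simp only [hgdef]; exact dif_pos h
    rw [h1, h2]
  have hF'W : ∀ i, i ≠ i0 → F' i ∈ W := fun i hi => by rw [hF'ne i hi]; exact hfW ⟨i, hi⟩
  have hF'SR : ∀ (i : Fin (n-3)), i ≠ i0 → F' i ∈ S i \ R := by
    intro i hi
    rw [hF'ne i hi]
    have h := hft ⟨i, hi⟩
    simp only [htdef] at h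
    exact h
  have hF'S : ∀ i, i ≠ i0 → F' i ∈ S i := fun i hi => (Finset.mem_sdiff.mp (hF'SR i hi)).1
  have hF'inj : ∀ i j, i ≠ i0 → j ≠ i0 → F' i = F' j → i = j := by
    intro i j hi hj h
    rw [hF'ne i hi, hF'ne j hj] at h
    exact congrArg Subtype.val (hfinj h)
  have hparS : ∀ (i : Fin (n-3)), i ≠ i0 → par (F' i) = S i \ {F' i} := by
    intro i hi
    rw [hparx _ (hF'W i hi), hgF i hi]
  have hpar3 : ∀ x ∈ W, (par x).card = 3 := by
    intro x hx
    obtain ⟨hne, hFx⟩ := hgW x hx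
    have hxS : x ∈ S (g x) := by
      have h2 := hF'SR (g x) hne
      rw [hFx] at h2
      exact (Finset.mem_sdiff.mp h2).1
    rw [hparx x hx, Finset.card_sdiff_of_subset (Finset.singleton_subset_iff.mpr hxS), hcard,
      Finset.card_singleton]
  have hsubW : ∀ x ∈ W, par x ⊆ W ∪ R := by
    intro x hx
    rw [hparx x hx]
    intro p hp
    have hpS : p ∈ S (g x) := (Finset.mem_sdiff.mp hp).1
    have hpI : p ∈ Finset.Icc 1 n := hS _ hpS
    by_cases hpR : p ∈ R
    · exact Finset.mem_union_right _ hpR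
    · exact Finset.mem_union_left _ (Finset.mem_sdiff.mpr ⟨hpI, hpR⟩)
  have hH : ∀ J ⊆ W, J.Nonempty → 3 ≤ ((J.biUnion par) \ J).card := by
    intro J hJW hJne
    set sJ : Finset (Fin (n-3)) := J.image g with hsJdef
    have hsJcard : sJ.card = J.card := Finset.card_image_of_injOn (by
      intro x hx y hy h
      have hx' := hgW x (hJW hx)
      have hy' := hgW y (hJW hy)
      rw [← hx'.2, ← hy'.2, h])
    have hsJne : sJ.Nonempty := hJne.image g
    have hkey : sJ.biUnion S = J ∪ J.biUnion par := by
      ext a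
      simp only [hsJdef, Finset.mem_biUnion, Finset.mem_union]
      constructor
      · rintro ⟨i, hi, hai⟩
        obtain ⟨x, hxJ, rfl⟩ := Finset.mem_image.mp hi
        by_cases hax : a = x
        · exact Or.inl (hax ▸ hxJ)
        · right
          refine ⟨x, hxJ, ?_⟩
          rw [hparx x (hJW hxJ)]
          exact Finset.mem_sdiff.mpr ⟨hai, by simp [hax]⟩
      · rintro (haJ | ⟨x, hxJ, hax⟩)
        · refine ⟨g a, Finset.mem_image_of_mem _ haJ, ?_⟩
          have h1 := hgW a (hJW haJ)
          have h2 := hF'SR (g a) h1.1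
          rw [h1.2] at h2
          exact (Finset.mem_sdiff.mp h2).1
        · refine ⟨g x, Finset.mem_image_of_mem _ hxJ, ?_⟩
          rw [hparx x (hJW hxJ)] at hax
          exact (Finset.mem_sdiff.mp hax).1
    have hCs := hC sJ hsJne
    rw [hkey, ← Finset.union_sdiff_self_eq_union,
      Finset.card_union_of_disjoint Finset.disjoint_sdiff] at hCs
    omega
  obtain ⟨X, hXW, hgP, hgQ⟩ := exists_coloring par W hWR hpar3 hsubW hH
  set P := X ∪ ({1,2} : Finset ℕ) with hPdef
  set Q := (W \ X) ∪ ({3,4} : Finset ℕ) with hQdef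
  have hdisj : Disjoint P Q := PQ_disjoint hXW hWR
  have hIcc : P ∪ Q = Finset.Icc 1 n := by
    rw [hPdef, hQdef, PQ_union hXW, hWdef]
    exact Finset.sdiff_union_of_subset hRIcc
  have hQP4 : ∀ i : Fin (n-3), i ≠ i0 → (S i ∩ P).card + (S i ∩ Q).card = 4 := by
    intro i hi
    rw [← hcard i]
    refine card_inter_partition hdisj ?_
    rw [hIcc]
    exact hS i
  have hgeP : ∀ i : Fin (n-3), i ≠ i0 → F' i ∈ X → 3 ≤ (S i ∩ P).card := by
    intro i hi hx
    have h2 := hgP.1 _ hx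
    have hFiP : F' i ∈ P := Finset.mem_union_left _ hx
    have hsubP : insert (F' i) ((par (F' i)) ∩ P) ⊆ S i ∩ P := by
      intro p hp
      rcases Finset.mem_insert.mp hp with rfl | hp'
      · exact Finset.mem_inter.mpr ⟨hF'S i hi, hFiP⟩
      · rw [hparS i hi] at hp'
        obtain ⟨hp1, hp2⟩ := Finset.mem_inter.mp hp'
        exact Finset.mem_inter.mpr ⟨(Finset.mem_sdiff.mp hp1).1, hp2⟩
    have hnotmem : F' i ∉ (par (F' i)) ∩ P := by
      rw [hparS i hi]
      simp
    have hcard2 := Finset.card_le_card hsubP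
    rw [Finset.card_insert_of_notMem hnotmem] at hcard2
    omega
  have hgeQ : ∀ i : Fin (n-3), i ≠ i0 → F' i ∈ W \ X → 3 ≤ (S i ∩ Q).card := by
    intro i hi hx
    have h2 := hgQ.1 _ hx
    have hFiQ : F' i ∈ Q := Finset.mem_union_left _ hx
    have hsubQ : insert (F' i) ((par (F' i)) ∩ Q) ⊆ S i ∩ Q := by
      intro p hp
      rcases Finset.mem_insert.mp hp with rfl | hp'
      · exact Finset.mem_inter.mpr ⟨hF'S i hi, hFiQ⟩
      · rw [hparS i hi] at hp'
        obtain ⟨hp1, hp2⟩ := Finset.mem_inter.mp hp'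
        exact Finset.mem_inter.mpr ⟨(Finset.mem_sdiff.mp hp1).1, hp2⟩
    have hnotmem : F' i ∉ (par (F' i)) ∩ Q := by
      rw [hparS i hi]
      simp
    have hcard2 := Finset.card_le_card hsubQ
    rw [Finset.card_insert_of_notMem hnotmem] at hcard2
    omega
  have hcharP : ∀ i : Fin (n-3), i ≠ i0 → (3 ≤ (S i ∩ P).card ↔ F' i ∈ X) := by
    intro i hi
    constructor
    · intro h3
      by_contra hxX
      have h4 := hgeQ i hi (Finset.mem_sdiff.mpr ⟨hF'W i hi, hxX⟩)
      have h5 := hQP4 i hi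
      omega
    · exact hgeP i hi
  have hcharQ : ∀ i : Fin (n-3), i ≠ i0 → (3 ≤ (S i ∩ Q).card ↔ F' i ∈ W \ X) := by
    intro i hi
    constructor
    · intro h3
      by_contra hxX
      have hx : F' i ∈ X := by
        by_contra h
        exact hxX (Finset.mem_sdiff.mpr ⟨hF'W i hi, h⟩)
      have h4 := hgeP i hi hx
      have h5 := hQP4 i hi
      omega
    · exact hgeQ i hi
  have h12R : ({1,2} : Finset ℕ) ⊆ R := by
    intro p hp
    rw [hRdef]
    simp only [Finset.mem_insert, Finset.mem_singleton] at hp ⊢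
    tauto
  have h34R : ({3,4} : Finset ℕ) ⊆ R := by
    intro p hp
    rw [hRdef]
    simp only [Finset.mem_insert, Finset.mem_singleton] at hp ⊢
    tauto
  have hX12 : Disjoint X ({1,2} : Finset ℕ) := by
    rw [Finset.disjoint_left]
    intro a ha hb
    exact hWR a (hXW ha) (h12R hb)
  have hWX34 : Disjoint (W \ X) ({3,4} : Finset ℕ) := by
    rw [Finset.disjoint_left]
    intro a ha hb
    exact hWR a (Finset.mem_sdiff.mp ha).1 (h34R hb)
  have hc12 : ({1,2} : Finset ℕ).card = 2 := rfl
  have hc34 : ({3,4} : Finset ℕ).card = 2 := rfl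
  have hPcard : P.card = X.card + 2 := by
    rw [hPdef, Finset.card_union_of_disjoint hX12, hc12]
  have hQcard : Q.card = (W \ X).card + 2 := by
    rw [hQdef, Finset.card_union_of_disjoint hWX34, hc34]
  have hsurjX : ∀ x ∈ X, ∃ i, i ≠ i0 ∧ F' i = x := by
    intro x hx
    have h := hgW x (hXW hx)
    exact ⟨g x, h.1, h.2⟩
  have hsurjQ : ∀ x ∈ W \ X, ∃ i, i ≠ i0 ∧ F' i = x := by
    intro x hx
    have h := hgW x ((Finset.mem_sdiff.mp hx).1)
    exact ⟨g x, h.1, h.2⟩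
  have hcountP := count_side S i0 F' P X hcharP hF'inj hsurjX
  have hcountQ := count_side S i0 F' Q (W \ X) hcharQ hF'inj hsurjQ
  have h0Icc : (0:ℕ) ∉ Finset.Icc 1 n := by simp
  have h0P : (0:ℕ) ∉ P := fun h => h0Icc (by rw [← hIcc]; exact Finset.mem_union_left _ h)
  have h0Q : (0:ℕ) ∉ Q := fun h => h0Icc (by rw [← hIcc]; exact Finset.mem_union_right _ h)
  have h0X : (0:ℕ) ∉ X := fun h => h0P (Finset.mem_union_left _ h)
  have h0WX : (0:ℕ) ∉ W \ X := fun h => h0Q (Finset.mem_union_left _ h)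
  have hcerbP := cerb_side S i0 F' par P X h0P h0X Finset.subset_union_left
    hF'S hparS hcharP hF'inj hgP.2
  have hcerbQ := cerb_side S i0 F' par Q (W \ X) h0Q h0WX Finset.subset_union_left
    hF'S hparS hcharQ hF'inj hgQ.2
  refine ⟨P, Q, hdisj, hIcc, ?_, ?_, ?_, ?_, ?_, hcerbP, hcerbQ⟩
  · rw [hPdef]; exact Finset.subset_union_right
  · rw [hQdef]; exact Finset.subset_union_right
  · intro i hi
    have h4 := hQP4 i hi
    by_cases hx : F' i ∈ X
    · have := hgeP i hi hx
      omega
    · have := hgeQ i hi (Finset.mem_sdiff.mpr ⟨hF'W i hi, hx⟩)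
      omega
  · have hX2 : P.card - 2 = X.card := by omega
    rw [hX2]
    exact hcountP
  · have hQ2 : Q.card - 2 = (W \ X).card := by omega
    rw [hQ2]
    exact hcountQ
end

section
/- Let n ≥ 3 be an integer. There exists a matroid whose ground set is the collection of all 4-element subsets of {1,…,n}, and whose bases are exactly the collections B of 4-element subsets of {1,…,n} with |B| = n − 3 such that |⋃_{S∈J} S| ≥ |J| + 3 for every nonempty subcollection J ⊆ B. -/
/-!
For a family `F` of `(k+1)`-sets write `⋃F` for the union of its members, and call a nonempty
`F` tight when `|⋃F| ≤ |F| + k`. Since `|⋃F|` is submodular in `F`, two tight subfamilies of an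
independent family that share a member have a tight union; hence the maximal tight subfamilies of
an independent `I` are pairwise disjoint. If no member of a larger independent `J` can be added
to `I`, every member of `J` lies inside `⋃T` for some maximal tight `T ⊆ I`, and independence of
`J` puts at most `|T|` of its members there; summing over the disjoint `T` gives `|J| ≤ |I|`.
This is the augmentation axiom. A `k`-set `K` together with the sets `K ∪ {a}` shows that the
rank is `|α| - k`.
-/

open Finset

namespace DilworthTruncation

variable {α : Type*} [DecidableEq α] {k : ℕ}

/-- Independence in the `k`-th Dilworth truncation of the free matroid on `α`, whose ground set
is the `(k+1)`-subsets of `α`; for `k = 3` this is the Cerberus condition. -/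
def Indep (k : ℕ) (I : Finset (Finset α)) : Prop :=
  (∀ S ∈ I, S.card = k + 1) ∧ ∀ J ⊆ I, J.Nonempty → J.card + k ≤ (J.biUnion id).card

def IsTight (k : ℕ) (F : Finset (Finset α)) : Prop :=
  F.Nonempty ∧ (F.biUnion id).card ≤ F.card + k

theorem indep_empty : Indep k (∅ : Finset (Finset α)) :=
  ⟨by simp, fun J hJ hne => absurd (subset_empty.1 hJ) hne.ne_empty⟩

theorem Indep.mono {I K : Finset (Finset α)} (hI : Indep k I) (hKI : K ⊆ I) : Indep k K :=
  ⟨fun S hS => hI.1 S (hKI hS), fun J hJ hne => hI.2 J (hJ.trans hKI) hne⟩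

theorem Indep.card_le [Fintype α] {I : Finset (Finset α)} (hI : Indep k I) :
    I.card ≤ Fintype.card α - k := by
  rcases I.eq_empty_or_nonempty with rfl | hne
  · simp
  · have := hI.2 I Subset.rfl hne
    have := card_le_univ (I.biUnion id)
    omega

theorem card_biUnion_union_add_card_biUnion_inter_le (F₁ F₂ : Finset (Finset α)) :
    ((F₁ ∪ F₂).biUnion id).card + ((F₁ ∩ F₂).biUnion id).card ≤
      (F₁.biUnion id).card + (F₂.biUnion id).card := by
  rw [union_biUnion, ← card_union_add_card_inter (F₁.biUnion id)]
  exact Nat.add_le_add_left (card_le_card (subset_inter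
    (biUnion_subset_biUnion_of_subset_left id (inter_subset_left : F₁ ∩ F₂ ⊆ F₁))
    (biUnion_subset_biUnion_of_subset_left id (inter_subset_right : F₁ ∩ F₂ ⊆ F₂)))) _

theorem isTight_singleton {e : Finset α} (he : e.card = k + 1) :
    IsTight k ({e} : Finset (Finset α)) := by
  simp [IsTight, he, Nat.add_comm]

theorem IsTight.union {F₁ F₂ : Finset (Finset α)} (h₁ : IsTight k F₁) (h₂ : IsTight k F₂)
    (hinter : (F₁ ∩ F₂).card + k ≤ ((F₁ ∩ F₂).biUnion id).card) : IsTight k (F₁ ∪ F₂) := by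
  refine ⟨h₁.1.mono subset_union_left, ?_⟩
  have := card_biUnion_union_add_card_biUnion_inter_le F₁ F₂
  have := card_union_add_card_inter F₁ F₂
  have := h₁.2
  have := h₂.2
  omega

theorem Indep.disjoint_of_maximal {I T₁ T₂ : Finset (Finset α)} (hI : Indep k I)
    (hT₁ : Maximal (fun F => F ⊆ I ∧ IsTight k F) T₁)
    (hT₂ : Maximal (fun F => F ⊆ I ∧ IsTight k F) T₂) (hne : T₁ ≠ T₂) : Disjoint T₁ T₂ := by
  rw [disjoint_iff_inter_eq_empty]
  by_contra h
  have hunion : T₁ ∪ T₂ ⊆ I ∧ IsTight k (T₁ ∪ T₂) :=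
    ⟨union_subset hT₁.1.1 hT₂.1.1, hT₁.1.2.union hT₂.1.2
      (hI.2 _ (inter_subset_left.trans hT₁.1.1) (nonempty_iff_ne_empty.2 h))⟩
  exact hne ((hT₁.eq_of_le hunion subset_union_left).trans
    (hT₂.eq_of_le hunion subset_union_right).symm)

theorem Indep.card_filter_subset_le {J : Finset (Finset α)} (hJ : Indep k J) {X : Finset α}
    {m : ℕ} (hX : X.card ≤ m + k) : (J.filter (· ⊆ X)).card ≤ m := by
  rcases (J.filter (· ⊆ X)).eq_empty_or_nonempty with h | hne
  · simp [h]
  · have := hJ.2 _ (filter_subset _ _) hne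
    have := card_le_card (biUnion_subset.2 fun e he => (mem_filter.1 he).2 :
      (J.filter (· ⊆ X)).biUnion id ⊆ X)
    omega

theorem Indep.card_le_of_forall_subset_biUnion {I J : Finset (Finset α)} (hI : Indep k I)
    (hJ : Indep k J) (hcov : ∀ e ∈ J, ∃ F ⊆ I, IsTight k F ∧ e ⊆ F.biUnion id) :
    J.card ≤ I.card := by
  classical
  set P : Finset (Finset α) → Prop := fun F => F ⊆ I ∧ IsTight k F
  set 𝓜 := I.powerset.filter (Maximal P)
  have hcovM : J ⊆ 𝓜.biUnion fun T => J.filter (· ⊆ T.biUnion id) := by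
    intro e he
    obtain ⟨F, hFI, hF, heF⟩ := hcov e he
    have hfin : {F | P F}.Finite := (I.powerset : Set (Finset (Finset α))).toFinite.subset
      fun F hF => mem_powerset.2 hF.1
    obtain ⟨T, hFT, hT⟩ := hfin.exists_le_maximal (show P F from ⟨hFI, hF⟩)
    exact mem_biUnion.2 ⟨T, mem_filter.2 ⟨mem_powerset.2 hT.1.1, hT⟩,
      mem_filter.2 ⟨he, heF.trans (biUnion_subset_biUnion_of_subset_left _ hFT)⟩⟩
  have hdisj : (𝓜 : Set (Finset (Finset α))).PairwiseDisjoint id :=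
    fun T₁ h₁ T₂ h₂ hne => hI.disjoint_of_maximal (mem_filter.1 h₁).2 (mem_filter.1 h₂).2 hne
  calc J.card
      ≤ ∑ T ∈ 𝓜, (J.filter (· ⊆ T.biUnion id)).card := (card_le_card hcovM).trans card_biUnion_le
    _ ≤ ∑ T ∈ 𝓜, T.card :=
        sum_le_sum fun T hT => hJ.card_filter_subset_le (mem_filter.1 hT).2.1.2.2
    _ = (𝓜.biUnion id).card := (card_biUnion hdisj).symm
    _ ≤ I.card := card_le_card (biUnion_subset.2 fun T hT => mem_powerset.1 (mem_filter.1 hT).1)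

theorem Indep.exists_isTight_of_not_indep_insert {I : Finset (Finset α)} {e : Finset α}
    (hI : Indep k I) (he : e.card = k + 1) (hnot : ¬ Indep k (insert e I)) :
    ∃ F ⊆ I, IsTight k F ∧ e ⊆ F.biUnion id := by
  have hcard : ∀ S ∈ insert e I, S.card = k + 1 := fun S hS =>
    (mem_insert.1 hS).elim (fun h => h ▸ he) (hI.1 S)
  obtain ⟨K, hKsub, hKne, hKlt⟩ : ∃ K ⊆ insert e I, K.Nonempty ∧
      (K.biUnion id).card < K.card + k := by
    by_contra! h
    exact hnot ⟨hcard, h⟩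
  have heK : e ∈ K := by
    by_contra heK
    have := hI.2 K ((subset_insert_iff_of_notMem heK).1 hKsub) hKne
    omega
  have hFI : K.erase e ⊆ I := subset_insert_iff.1 hKsub
  have hKcard : K.card = (K.erase e).card + 1 := (card_erase_add_one heK).symm
  have hFne : (K.erase e).Nonempty := by
    rw [nonempty_iff_ne_empty]
    intro hF
    rw [← insert_erase heK, hF] at hKlt
    simp [he, Nat.add_comm] at hKlt
  have hsub : (K.erase e).biUnion id ⊆ K.biUnion id :=
    biUnion_subset_biUnion_of_subset_left _ (erase_subset _ _)
  have hFlow := hI.2 _ hFI hFne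
  have heq : (K.erase e).biUnion id = K.biUnion id :=
    eq_of_subset_of_card_le hsub (by omega)
  refine ⟨K.erase e, hFI, ⟨hFne, by rw [heq]; omega⟩, ?_⟩
  rw [heq]
  exact subset_biUnion_of_mem id heK

theorem Indep.exists_insert {I J : Finset (Finset α)} (hI : Indep k I) (hJ : Indep k J)
    (hlt : I.card < J.card) : ∃ e ∈ J, e ∉ I ∧ Indep k (insert e I) := by
  by_contra! h
  refine hlt.not_ge (hI.card_le_of_forall_subset_biUnion hJ fun e he => ?_)
  by_cases heI : e ∈ I
  · exact ⟨{e}, singleton_subset_iff.2 heI, isTight_singleton (hI.1 e heI), by simp⟩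
  · exact hI.exists_isTight_of_not_indep_insert (hJ.1 e he) (h e he heI)

theorem injOn_insert_of_disjoint {s K : Finset α} (hs : Disjoint s K) :
    Set.InjOn (insert · K) s := by
  intro a ha b _ hab
  have : a ∈ insert b K := by
    rw [← show insert a K = insert b K from hab]
    exact mem_insert_self a K
  exact (mem_insert.1 this).resolve_right (disjoint_left.1 hs ha)

theorem indep_image_insert {s K : Finset α} (hs : Disjoint s K) :
    Indep K.card (s.image (insert · K)) := by
  refine ⟨?_, fun J hJ hJne => ?_⟩
  · simp only [mem_image, forall_exists_index, and_imp, forall_apply_eq_imp_iff₂]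
    exact fun a ha => card_insert_of_notMem (disjoint_left.1 hs ha)
  obtain ⟨A, hA, rfl⟩ := subset_image_iff.1 hJ
  have hAne : A.Nonempty := hJne.of_image
  have hunion : (A.image (insert · K)).biUnion id = A ∪ K := by
    ext x
    simp only [image_biUnion, mem_biUnion, id, mem_insert, mem_union]
    constructor
    · rintro ⟨a, ha, rfl | hx⟩
      exacts [Or.inl ha, Or.inr hx]
    · rintro (hx | hx)
      exacts [⟨x, hx, Or.inl rfl⟩, ⟨hAne.choose, hAne.choose_spec, Or.inr hx⟩]
  rw [hunion, card_image_of_injOn (injOn_insert_of_disjoint (hs.mono_left hA)),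
    card_union_of_disjoint (hs.mono_left hA)]

theorem exists_indep_card_eq [Fintype α] (k : ℕ) :
    ∃ C : Finset (Finset α), Indep k C ∧ C.card = Fintype.card α - k := by
  by_cases hk : k ≤ Fintype.card α
  · obtain ⟨K, -, hK⟩ := exists_subset_card_eq (s := (univ : Finset α)) (by simpa using hk)
    refine ⟨Kᶜ.image (insert · K), hK ▸ indep_image_insert disjoint_compl_left, ?_⟩
    rw [card_image_of_injOn (injOn_insert_of_disjoint disjoint_compl_left), card_compl, hK]
  · exact ⟨∅, indep_empty, by simp; omega⟩

variable (α k) in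
def matroid : Matroid (Finset α) :=
  (IndepMatroid.ofFinset {S : Finset α | S.card = k + 1} (Indep k) indep_empty
    (fun ⦃_ _⦄ hJ hIJ => hJ.mono hIJ) (fun ⦃_ _⦄ hI hJ hlt => hI.exists_insert hJ hlt)
    (fun ⦃_⦄ hI S hS => hI.1 S (mem_coe.1 hS))).matroid

theorem matroid_E : (matroid α k).E = {S | S.card = k + 1} := rfl

theorem matroid_indep_iff {I : Finset (Finset α)} : (matroid α k).Indep I ↔ Indep k I := by
  rw [matroid, IndepMatroid.matroid_indep_iff]
  exact IndepMatroid.ofFinset_indep ..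

theorem matroid_isBase_of_card_eq [Fintype α] {B : Finset (Finset α)} (hB : Indep k B)
    (hcard : B.card = Fintype.card α - k) : (matroid α k).IsBase B := by
  refine (matroid_indep_iff.2 hB).isBase_of_maximal fun J hJ hBJ => ?_
  lift J to Finset (Finset α) using J.toFinite
  rw [coe_subset] at hBJ
  rw [eq_of_subset_of_card_le hBJ ((matroid_indep_iff.1 hJ).card_le.trans hcard.ge)]

theorem matroid_isBase_iff [Fintype α] {B : Finset (Finset α)} :
    (matroid α k).IsBase B ↔ Indep k B ∧ B.card = Fintype.card α - k := by
  obtain ⟨C, hC, hCcard⟩ := exists_indep_card_eq (α := α) k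
  refine ⟨fun hB => ⟨matroid_indep_iff.1 hB.indep, ?_⟩,
    fun h => matroid_isBase_of_card_eq h.1 h.2⟩
  have := hB.ncard_eq_ncard_of_isBase (matroid_isBase_of_card_eq hC hCcard)
  rwa [Set.ncard_coe_finset, Set.ncard_coe_finset, hCcard] at this

end DilworthTruncation

theorem exists_dilworth_truncation_matroid_general (n : ℕ) :
    ∃ M : Matroid (Finset (Fin n)),
      M.E = {S : Finset (Fin n) | S.card = 4} ∧
      ∀ B : Finset (Finset (Fin n)),
        (M.IsBase ↑B ↔
          ((∀ S ∈ B, S.card = 4) ∧ B.card = n - 3 ∧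
            ∀ J ⊆ B, J.Nonempty → J.card + 3 ≤ (J.biUnion id).card)) := by
  refine ⟨DilworthTruncation.matroid (Fin n) 3, DilworthTruncation.matroid_E, fun B => ?_⟩
  rw [DilworthTruncation.matroid_isBase_iff, Fintype.card_fin, DilworthTruncation.Indep]
  tauto

/-- There exists a matroid (the third Dilworth truncation `D_3(U_{n,n})` of the Boolean
matroid) whose ground set is the collection of all 4-element subsets of `{1, …, n}` and whose
bases are exactly the collections `B` of 4-element subsets with `|B| = n - 3` satisfying the
Cerberus condition `|⋃_{S ∈ J} S| ≥ |J| + 3` for every nonempty `J ⊆ B`. -/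
theorem exists_dilworth_truncation_matroid (n : ℕ) (hn : 3 ≤ n) :
    ∃ M : Matroid (Finset (Fin n)),
      M.E = {S : Finset (Fin n) | S.card = 4} ∧
      ∀ B : Finset (Finset (Fin n)),
        (M.IsBase ↑B ↔
          ((∀ S ∈ B, S.card = 4) ∧ B.card = n - 3 ∧
            ∀ J ⊆ B, J.Nonempty → J.card + 3 ≤ (J.biUnion id).card)) :=
  exists_dilworth_truncation_matroid_general n
end
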